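/- arXiv:1706.04960 — 10 statements merged into one kernel-verified Lean document; each statement's English description precedes it below -/
import Mathlib

section
/- For real numbers m, p, k with m > 0, p > 0, p > k > -m, if k(p - m - k) ≥ 0 then Γ(p)Γ(m) ≥ Γ(p-k)Γ(m+k). -/
lemma convex_pair_aux (f : ℝ → ℝ) (hf : ConvexOn ℝ (Set.Ioi 0) f)
    {a b c : ℝ} (ha : 0 < a) (hac : a ≤ c) (hcb : c ≤ b) :
    f c + f (a + b - c) ≤ f a + f b := by
  have hb : 0 < b := lt_of_lt_of_le ha (hac.trans hcb)
  rcases eq_or_lt_of_le (hac.trans hcb) with heq | hab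
  · have hca : c = a := le_antisymm (heq ▸ hcb) hac
    have h2 : a + b - c = b := by rw [hca]; ring
    rw [h2, hca]
  · set t := (c - a) / (b - a) with ht
    have hba : 0 < b - a := by linarith
    have ht0 : 0 ≤ t := div_nonneg (by linarith) hba.le
    have ht1 : t ≤ 1 := (div_le_one hba).2 (by linarith)
    have htb : t * (b - a) = c - a := div_mul_cancel₀ _ hba.ne'
    have h1 : c = (1 - t) * a + t * b := by linear_combination -htb
    have h2 : a + b - c = t * a + (1 - t) * b := by linear_combination htb
    have haS : a ∈ Set.Ioi (0:ℝ) := ha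
    have hbS : b ∈ Set.Ioi (0:ℝ) := hb
    have e1 := hf.2 haS hbS (by linarith : (0:ℝ) ≤ 1 - t) ht0 (by ring)
    have e2 := hf.2 haS hbS ht0 (by linarith : (0:ℝ) ≤ 1 - t) (by ring)
    simp only [smul_eq_mul] at e1 e2
    rw [h2, h1]
    linarith [e1, e2]

theorem gamma_ineq_ge (m p k : ℝ) (hm : 0 < m) (hp : 0 < p)
    (hpk : k < p) (hkm : -m < k) (h : 0 ≤ k * (p - m - k)) :
    Real.Gamma (p - k) * Real.Gamma (m + k) ≤ Real.Gamma p * Real.Gamma m := by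
  have hpk0 : 0 < p - k := by linarith
  have hmk0 : 0 < m + k := by linarith
  set f := Real.log ∘ Real.Gamma with hf
  have hconv : ConvexOn ℝ (Set.Ioi 0) f := Real.convexOn_log_Gamma
  have key : f (p - k) + f (m + k) ≤ f p + f m := by
    rcases le_or_gt 0 k with hk | hk
    · -- use a = m, b = p, c = m + k
      rcases eq_or_lt_of_le hk with hk0 | hkpos
      · rw [← hk0]; simp
      · have hple : m + k ≤ p := by nlinarith
        have := convex_pair_aux f hconv hm (by linarith : m ≤ m + k) hple
        have heq : m + p - (m + k) = p - k := by ring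
        rw [heq] at this
        linarith
    · -- use a = p, b = m, c = p - k
      have hle : p - k ≤ m := by nlinarith
      have := convex_pair_aux f hconv hp (by linarith : p ≤ p - k) hle
      have heq : p + m - (p - k) = m + k := by ring
      rw [heq] at this
      linarith
  have g1 := Real.Gamma_pos_of_pos hpk0
  have g2 := Real.Gamma_pos_of_pos hmk0
  have g3 := Real.Gamma_pos_of_pos hp
  have g4 := Real.Gamma_pos_of_pos hm
  have : Real.log (Real.Gamma (p - k) * Real.Gamma (m + k)) ≤
      Real.log (Real.Gamma p * Real.Gamma m) := by
    rw [Real.log_mul g1.ne' g2.ne', Real.log_mul g3.ne' g4.ne']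
    exact key
  exact (Real.log_le_log_iff (by positivity) (by positivity)).1 this
end

section
/- For real numbers m, p, k with m > 0, p > 0, p > k > -m, if k(p - m - k) ≤ 0 then Γ(p)Γ(m) ≤ Γ(p-k)Γ(m+k). -/
/-! Since `log ∘ Γ` is convex on `(0, ∞)`, the sum `log Γ x + log Γ y` over pairs with a fixed
sum `x + y` grows as the pair spreads out. The condition `k (p - m - k) ≤ 0` says that
`{p - k, m + k}` is more spread out than `{p, m}`: its smaller element lies below both `p` and `m`. -/

open Real

theorem ConvexOn.map_add_map_le_of_add_eq {𝕜 β : Type*} [Field 𝕜] [LinearOrder 𝕜]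
    [IsStrictOrderedRing 𝕜] [AddCommMonoid β] [PartialOrder β] [IsOrderedAddMonoid β]
    [Module 𝕜 β] {s : Set 𝕜} {f : 𝕜 → β} (hf : ConvexOn 𝕜 s f) {a b c d : 𝕜}
    (hc : c ∈ s) (hd : d ∈ s) (hca : c ≤ a) (hcb : c ≤ b) (hsum : a + b = c + d) :
    f a + f b ≤ f c + f d := by
  have had : a ∈ segment 𝕜 c d := by
    rw [segment_eq_Icc (by linarith)]
    exact ⟨hca, by linarith⟩
  obtain ⟨θ, φ, hθ, hφ, hθφ, rfl⟩ := had
  obtain rfl : b = φ • c + θ • d := by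
    simp only [smul_eq_mul] at hsum ⊢
    linear_combination hsum - (c + d) * hθφ
  calc f (θ • c + φ • d) + f (φ • c + θ • d)
      ≤ (θ • f c + φ • f d) + (φ • f c + θ • f d) :=
        add_le_add (hf.2 hc hd hθ hφ hθφ) (hf.2 hc hd hφ hθ (by rw [add_comm, hθφ]))
    _ = f c + f d := by
        rw [add_add_add_comm, ← add_smul, add_comm (φ • f d), ← add_smul, hθφ,
          one_smul, one_smul]

theorem Real.Gamma_mul_Gamma_le_of_add_eq {a b c d : ℝ} (hc : 0 < c) (hca : c ≤ a) (hcb : c ≤ b)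
    (hsum : a + b = c + d) : Gamma a * Gamma b ≤ Gamma c * Gamma d := by
  have hcd : c ≤ d := by linarith
  have hΓ {x : ℝ} (hx : c ≤ x) : 0 < Gamma x := Gamma_pos_of_pos (hc.trans_le hx)
  have hlog := convexOn_log_Gamma.map_add_map_le_of_add_eq hc (hc.trans_le hcd) hca hcb hsum
  simp only [Function.comp_apply] at hlog
  rwa [← log_mul (hΓ hca).ne' (hΓ hcb).ne', ← log_mul (hΓ le_rfl).ne' (hΓ hcd).ne',
    log_le_log_iff (mul_pos (hΓ hca) (hΓ hcb)) (mul_pos (hΓ le_rfl) (hΓ hcd))] at hlog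

theorem gamma_ineq_le_general (m p k : ℝ)
    (hpk : k < p) (hkm : -m < k) (h : k * (p - m - k) ≤ 0) :
    Real.Gamma p * Real.Gamma m ≤ Real.Gamma (p - k) * Real.Gamma (m + k) := by
  rcases lt_trichotomy k 0 with hk | rfl | hk
  · have hmkp : m + k ≤ p := by linarith [nonneg_of_mul_nonpos_right h hk]
    rw [mul_comm, mul_comm (Gamma (p - k))]
    exact Gamma_mul_Gamma_le_of_add_eq (by linarith) (by linarith) hmkp (by ring)
  · simp
  · have hpkm : p - k ≤ m := by linarith [nonpos_of_mul_nonpos_right h hk]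
    exact Gamma_mul_Gamma_le_of_add_eq (by linarith) (by linarith) hpkm (by ring)

theorem gamma_ineq_le (m p k : ℝ) (hm : 0 < m) (hp : 0 < p)
    (hpk : k < p) (hkm : -m < k) (h : k * (p - m - k) ≤ 0) :
    Real.Gamma p * Real.Gamma m ≤ Real.Gamma (p - k) * Real.Gamma (m + k) :=
  gamma_ineq_le_general m p k hpk hkm h
end

section
/- The function F(α) = Γ(α+3)Γ(α/2 + 9/2) / (Γ(α/2 + 2)Γ(α + 9/2)) is monotone increasing on the interval [0,2]. -/
/-!
By Gauss's product formula, `log Γ(s)` is the limit of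
`s log n + log n! - ∑_{m ≤ n} log (s + m)`. In `log F(b) - log F(a)` the `log n` and `log n!`
terms cancel (halving the arguments of the middle factors costs only a common `log 2`), which
leaves the limit of the partial sums of
`λ(4 + 2k) + λ(9/2 + k) - λ(3 + k) - λ(9 + 2k)`, where `λ(c) = log ((b + c) / (a + c))`.
For `0 ≤ a ≤ b`, `λ` is decreasing and midpoint convex in `c`, and `λ(3) ≤ λ(5) + λ(7)`.
Pairing consecutive half-integer terms, discarding the nonnegative terms `λ(4 + 2k) - λ(9 + 2k)`
with `k > p` and telescoping bound the partial sum of length `2p + 2` below by `-λ(2p + 9)`,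
which tends to `0`.
-/

open Real Filter Finset Topology
open Real.BohrMollerup (logGammaSeq tendsto_log_gamma)

noncomputable def F (α : ℝ) : ℝ :=
  Gamma (α + 3) * Gamma (α / 2 + 9 / 2) / (Gamma (α / 2 + 2) * Gamma (α + 9 / 2))

theorem sum_range_two_mul {M : Type*} [AddCommMonoid M] (g : ℕ → M) (n : ℕ) :
    ∑ k ∈ range (2 * n), g k = ∑ i ∈ range n, (g (2 * i) + g (2 * i + 1)) := by
  induction n with
  | zero => simp
  | succ n ih => rw [mul_add_one, sum_range_succ, sum_range_succ, ih, sum_range_succ, add_assoc]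

theorem neg_le_sum_range_of_antitoneOn {f : ℝ → ℝ} (hf : AntitoneOn f (Set.Ici 4))
    (hmid : ∀ c ≥ 5, 2 * f c ≤ f (c - 1 / 2) + f (c + 1 / 2)) (h357 : f 3 ≤ f 5 + f 7)
    (p : ℕ) :
    -f (2 * p + 9) ≤ ∑ k ∈ range (2 * p + 2),
      (f (4 + 2 * k) + f (9 / 2 + k) - f (3 + k) - f (9 + 2 * k)) := by
  have htelescope : ∑ i ∈ range (p + 1), (2 * f (5 + 2 * i) - f (3 + 2 * i) - f (9 + 2 * i))
      = f 5 + f 7 - f 3 + f (2 * p + 5) - f (2 * p + 7) - f (2 * p + 9) := by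
    induction p with
    | zero => norm_num; ring
    | succ p ih => rw [sum_range_succ, ih]; push_cast; ring_nf
  have hpair : ∑ i ∈ range (p + 1), (2 * f (5 + 2 * i) - f (3 + 2 * i) - f (4 + 2 * i))
      ≤ ∑ k ∈ range (2 * p + 2), (f (9 / 2 + k) - f (3 + k)) := by
    rw [show 2 * p + 2 = 2 * (p + 1) by ring, sum_range_two_mul]
    gcongr with i
    have := hmid (5 + 2 * i) (by linarith [(i.cast_nonneg : (0 : ℝ) ≤ i)])
    push_cast
    ring_nf at this ⊢
    linarith
  have hdrop : ∑ i ∈ range (p + 1), (f (4 + 2 * i) - f (9 + 2 * i))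
      ≤ ∑ k ∈ range (2 * p + 2), (f (4 + 2 * k) - f (9 + 2 * k)) := by
    refine sum_le_sum_of_subset_of_nonneg (range_subset_range.2 (by omega)) fun k _ _ => ?_
    have hk : (4 : ℝ) ≤ 4 + 2 * k := le_add_of_nonneg_right (by positivity)
    exact sub_nonneg.2 (hf hk (by simp only [Set.mem_Ici]; linarith) (by linarith))
  have htail : f (2 * p + 7) ≤ f (2 * p + 5) := by
    have hp : (0 : ℝ) ≤ p := p.cast_nonneg
    exact hf (by simp only [Set.mem_Ici]; linarith) (by simp only [Set.mem_Ici]; linarith)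
      (by linarith)
  calc -f (2 * p + 9) ≤ f 5 + f 7 - f 3 + f (2 * p + 5) - f (2 * p + 7) - f (2 * p + 9) := by
        linarith
    _ = ∑ i ∈ range (p + 1), (2 * f (5 + 2 * i) - f (3 + 2 * i) - f (4 + 2 * i))
        + ∑ i ∈ range (p + 1), (f (4 + 2 * i) - f (9 + 2 * i)) := by
        rw [← htelescope, ← sum_add_distrib]
        exact sum_congr rfl fun i _ => by ring
    _ ≤ ∑ k ∈ range (2 * p + 2), (f (9 / 2 + k) - f (3 + k))
        + ∑ k ∈ range (2 * p + 2), (f (4 + 2 * k) - f (9 + 2 * k)) := add_le_add hpair hdrop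
    _ = _ := by
        rw [← sum_add_distrib]
        exact sum_congr rfl fun k _ => by ring

noncomputable def logRatio (a b c : ℝ) : ℝ := log ((b + c) / (a + c))

section logRatio

variable {a b : ℝ}

theorem logRatio_half_half (c : ℝ) : logRatio (a / 2) (b / 2) c = logRatio a b (2 * c) := by
  rw [logRatio, logRatio, show b / 2 + c = (b + 2 * c) / 2 by ring,
    show a / 2 + c = (a + 2 * c) / 2 by ring, div_div_div_cancel_right₀ two_ne_zero]

theorem logRatio_antitoneOn (hab : a ≤ b) : AntitoneOn (logRatio a b) (Set.Ioi (-a)) := by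
  intro c hc c' hc' hcc'
  simp only [Set.mem_Ioi] at hc hc'
  refine log_le_log (div_pos (by linarith) (by linarith)) ?_
  rw [div_le_div_iff₀ (by linarith) (by linarith)]
  nlinarith

theorem two_mul_logRatio_le (hab : a ≤ b) {c h : ℝ} (hh₀ : 0 ≤ h) (hh : h < a + c) :
    2 * logRatio a b c ≤ logRatio a b (c - h) + logRatio a b (c + h) := by
  have hr : 0 < (b + c) / (a + c) := div_pos (by linarith) (by linarith)
  rw [two_mul, logRatio, logRatio, logRatio, ← log_mul hr.ne' hr.ne',
    ← log_mul (div_pos (by linarith) (by linarith)).ne' (div_pos (by linarith) (by linarith)).ne']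
  refine log_le_log (mul_pos hr hr) ?_
  rw [div_mul_div_comm, div_mul_div_comm, div_le_div_iff₀ (mul_pos (by linarith) (by linarith))
    (mul_pos (by linarith) (by linarith))]
  have hsq : (a + c) * (a + c) ≤ (b + c) * (b + c) :=
    mul_self_le_mul_self (by linarith) (by linarith)
  nlinarith [mul_le_mul_of_nonneg_left hsq (mul_self_nonneg h)]

theorem logRatio_three_le (ha : 0 ≤ a) (hab : a ≤ b) :
    logRatio a b 3 ≤ logRatio a b 5 + logRatio a b 7 := by
  have hb : 0 ≤ b := ha.trans hab
  rw [logRatio, logRatio, logRatio, ← log_mul (by positivity) (by positivity)]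
  refine log_le_log (by positivity) ?_
  rw [div_mul_div_comm, div_le_div_iff₀ (by positivity) (by positivity)]
  have hba : 0 ≤ b - a := sub_nonneg.2 hab
  nlinarith [mul_nonneg hba (mul_nonneg ha hb), mul_nonneg hba ha, mul_nonneg hba hb]

end logRatio

theorem tendsto_logRatio_atTop (a b : ℝ) : Tendsto (logRatio a b) atTop (𝓝 0) := by
  have h := (tendsto_log_comp_add_sub_log b).sub (tendsto_log_comp_add_sub_log a)
  rw [sub_zero] at h
  refine h.congr' ?_
  filter_upwards [eventually_gt_atTop (-a), eventually_gt_atTop (-b)] with c ha hb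
  rw [logRatio, log_div (by linarith) (by linarith), add_comm b, add_comm a]
  ring

theorem logGammaSeq_add_sub_logGammaSeq_add {x y c : ℝ} (hx : 0 < x + c) (hy : 0 < y + c)
    (n : ℕ) : logGammaSeq (y + c) n - logGammaSeq (x + c) n
      = (y - x) * log n - ∑ m ∈ range (n + 1), logRatio x y (c + m) := by
  have hlog : ∀ m ∈ range (n + 1),
      logRatio x y (c + m) = log (y + c + m) - log (x + c + m) := fun m _ => by
    rw [logRatio, ← add_assoc, ← add_assoc,
      log_div (add_pos_of_pos_of_nonneg hy m.cast_nonneg).ne'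
        (add_pos_of_pos_of_nonneg hx m.cast_nonneg).ne']
  rw [sum_congr rfl hlog, sum_sub_distrib, logGammaSeq, logGammaSeq]
  ring

noncomputable def logFSeq (x : ℝ) (n : ℕ) : ℝ :=
  logGammaSeq (x + 3) n + logGammaSeq (x / 2 + 9 / 2) n - logGammaSeq (x / 2 + 2) n
    - logGammaSeq (x + 9 / 2) n

theorem F_pos {x : ℝ} (hx : -3 < x) : 0 < F x := by
  unfold F
  have := Gamma_pos_of_pos (show 0 < x + 3 by linarith)
  have := Gamma_pos_of_pos (show 0 < x / 2 + 9 / 2 by linarith)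
  have := Gamma_pos_of_pos (show 0 < x / 2 + 2 by linarith)
  have := Gamma_pos_of_pos (show 0 < x + 9 / 2 by linarith)
  positivity

theorem tendsto_logFSeq {x : ℝ} (hx : -3 < x) : Tendsto (logFSeq x) atTop (𝓝 (log (F x))) := by
  have h₁ := Gamma_pos_of_pos (show 0 < x + 3 by linarith)
  have h₂ := Gamma_pos_of_pos (show 0 < x / 2 + 9 / 2 by linarith)
  have h₃ := Gamma_pos_of_pos (show 0 < x / 2 + 2 by linarith)
  have h₄ := Gamma_pos_of_pos (show 0 < x + 9 / 2 by linarith)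
  rw [F, log_div (by positivity) (by positivity), log_mul h₁.ne' h₂.ne',
    log_mul h₃.ne' h₄.ne', ← sub_sub]
  exact (((tendsto_log_gamma (by linarith)).add (tendsto_log_gamma (by linarith))).sub
    (tendsto_log_gamma (by linarith))).sub (tendsto_log_gamma (by linarith))

theorem logFSeq_sub_logFSeq {a b : ℝ} (ha : -3 < a) (hb : -3 < b) (n : ℕ) :
    logFSeq b n - logFSeq a n = ∑ k ∈ range (n + 1), (logRatio a b (4 + 2 * k)
      + logRatio a b (9 / 2 + k) - logRatio a b (3 + k) - logRatio a b (9 + 2 * k)) := by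
  have h₁ := logGammaSeq_add_sub_logGammaSeq_add (x := a) (y := b) (c := 3)
    (by linarith) (by linarith) n
  have h₂ := logGammaSeq_add_sub_logGammaSeq_add (x := a / 2) (y := b / 2) (c := 9 / 2)
    (by linarith) (by linarith) n
  have h₃ := logGammaSeq_add_sub_logGammaSeq_add (x := a / 2) (y := b / 2) (c := 2)
    (by linarith) (by linarith) n
  have h₄ := logGammaSeq_add_sub_logGammaSeq_add (x := a) (y := b) (c := 9 / 2)
    (by linarith) (by linarith) n
  have hhalf : ∀ (c : ℝ) (m : ℕ),
      logRatio (a / 2) (b / 2) (c + m) = logRatio a b (2 * c + 2 * m) :=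
    fun c m => by rw [logRatio_half_half, mul_add]
  simp only [hhalf] at h₂ h₃
  rw [show (2 : ℝ) * (9 / 2) = 9 by norm_num] at h₂
  rw [show (2 : ℝ) * 2 = 4 by norm_num] at h₃
  unfold logFSeq
  simp only [sum_add_distrib, sum_sub_distrib]
  linear_combination h₁ + h₂ - h₃ - h₄

theorem neg_logRatio_le_logFSeq_sub_logFSeq {a b : ℝ} (ha : 0 ≤ a) (hab : a ≤ b) (p : ℕ) :
    -logRatio a b (2 * p + 9) ≤ logFSeq b (2 * p + 1) - logFSeq a (2 * p + 1) := by
  rw [logFSeq_sub_logFSeq (by linarith) (by linarith)]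
  refine neg_le_sum_range_of_antitoneOn ((logRatio_antitoneOn hab).mono fun c hc => ?_)
    (fun c hc => two_mul_logRatio_le hab (by norm_num) (by linarith)) (logRatio_three_le ha hab) p
  simp only [Set.mem_Ici, Set.mem_Ioi] at hc ⊢
  linarith

theorem monotoneOn_F : MonotoneOn F (Set.Ici 0) := by
  intro a ha b hb hab
  simp only [Set.mem_Ici] at ha hb
  have hodd : Tendsto (fun p : ℕ => 2 * p + 1) atTop atTop :=
    tendsto_atTop_mono (fun p => by simp only [id]; omega) tendsto_id
  have hlin : Tendsto (fun p : ℕ => (2 * p + 9 : ℝ)) atTop atTop :=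
    tendsto_atTop_mono (fun p => by linarith [p.cast_nonneg (α := ℝ)])
      tendsto_natCast_atTop_atTop
  have hlim := (((tendsto_logFSeq (x := b) (by linarith)).sub
    (tendsto_logFSeq (x := a) (by linarith))).comp hodd).add
    ((tendsto_logRatio_atTop a b).comp hlin)
  have hnonneg : 0 ≤ log (F b) - log (F a) + 0 := ge_of_tendsto' hlim fun p => by
    simp only [Function.comp_apply]
    linarith [neg_logRatio_le_logFSeq_sub_logFSeq ha hab p]
  exact (log_le_log_iff (F_pos (by linarith)) (F_pos (by linarith))).1 (by linarith)

theorem F_monotone :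
    MonotoneOn (fun α : ℝ =>
      Real.Gamma (α + 3) * Real.Gamma (α / 2 + 9 / 2) /
        (Real.Gamma (α / 2 + 2) * Real.Gamma (α + 9 / 2)))
      (Set.Icc 0 2) :=
  monotoneOn_F.mono Set.Icc_subset_Ici_self
end

section
/- For all α ∈ [0,2]: 4·((α+7)/(α+4)) · (Γ(α/2+2)Γ(α+9/2))/(Γ(α+3)Γ(α/2+9/2)) ≤ 2·(α+7)/(α+4). -/
/-!
By Euler's limit formula, if `a + b = c + d` then `Γ(a)Γ(b) / (Γ(c)Γ(d))` is the infinite product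
of the factors `(c + i)(d + i) / ((a + i)(b + i)) = 1 - (ab - cd) / ((a + i)(b + i))`.
For `a = α + 3`, `b = α/2 + 9/2`, `c = α/2 + 3`, `d = α + 9/2` one has `ab - cd = 3α/4`, and
Weierstrass' inequality `∏ (1 - εᵢ) ≥ 1 - ∑ εᵢ` together with the telescoping bound
`(a + i)(b + i) ≥ (y + i)(y + i + 1)`, `y = 3 + 3α/4`, bounds the ratio below by
`1 - (3α/4)/y = 4/(4 + α)`. As `Γ(α/2 + 3) = (α/2 + 2) Γ(α/2 + 2)`, this is the inequality
`2 Γ(α/2 + 2) Γ(α + 9/2) ≤ Γ(α + 3) Γ(α/2 + 9/2)`.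
-/

open Real Filter Topology Finset

theorem Finset.one_sub_sum_le_prod_one_sub {ι R : Type*} [CommRing R] [LinearOrder R]
    [IsStrictOrderedRing R] (s : Finset ι) {f : ι → R} (h0 : ∀ i ∈ s, 0 ≤ f i)
    (h1 : ∀ i ∈ s, f i ≤ 1) :
    1 - ∑ i ∈ s, f i ≤ ∏ i ∈ s, (1 - f i) := by
  classical
  induction s using Finset.induction_on with
  | empty => simp
  | insert j s hj ih =>
    simp only [mem_insert, forall_eq_or_imp] at h0 h1
    rw [sum_insert hj, prod_insert hj]
    have hsum : 0 ≤ ∑ i ∈ s, f i := sum_nonneg h0.2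
    have hprod : 1 - ∑ i ∈ s, f i ≤ ∏ i ∈ s, (1 - f i) := ih h0.2 h1.2
    nlinarith [h0.1, h1.1]

theorem sum_range_one_div_mul_add_one_le {y : ℝ} (hy : 0 < y) (n : ℕ) :
    ∑ i ∈ range n, 1 / ((y + i) * (y + i + 1)) ≤ 1 / y := by
  have htel : ∀ i : ℕ, 1 / ((y + i) * (y + i + 1)) = 1 / (y + i) - 1 / (y + (i + 1 : ℕ)) := by
    intro i
    have : 0 < y + i := by positivity
    push_cast
    field_simp
    ring
  rw [sum_congr rfl fun i _ => htel i, sum_range_sub', Nat.cast_zero, add_zero]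
  have : 0 ≤ 1 / (y + n) := by positivity
  linarith

theorem Real.GammaSeq_mul_div_GammaSeq_mul {a b c d : ℝ} (h : a + b = c + d) {n : ℕ} (hn : n ≠ 0) :
    GammaSeq a n * GammaSeq b n / (GammaSeq c n * GammaSeq d n) =
      ∏ i ∈ range (n + 1), ((c + i) * (d + i) / ((a + i) * (b + i))) := by
  have hpos : (0 : ℝ) < n := by positivity
  have hnum : (n : ℝ) ^ c * n.factorial * ((n : ℝ) ^ d * n.factorial) =
      (n : ℝ) ^ a * n.factorial * ((n : ℝ) ^ b * n.factorial) := by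
    rw [mul_mul_mul_comm, mul_mul_mul_comm _ (n.factorial : ℝ), ← rpow_add hpos,
      ← rpow_add hpos, h]
  simp only [GammaSeq, prod_div_distrib, prod_mul_distrib]
  rw [div_mul_div_comm, div_mul_div_comm, hnum, div_div_div_cancel_left' _ _ (by positivity)]

theorem Real.tendsto_prod_div_mul_Gamma {a b c d : ℝ} (hc : 0 < c) (hd : 0 < d)
    (h : a + b = c + d) :
    Tendsto (fun n : ℕ => ∏ i ∈ range n, ((c + i) * (d + i) / ((a + i) * (b + i)))) atTop
      (𝓝 (Gamma a * Gamma b / (Gamma c * Gamma d))) := by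
  have hlim := ((GammaSeq_tendsto_Gamma a).mul (GammaSeq_tendsto_Gamma b)).div
    ((GammaSeq_tendsto_Gamma c).mul (GammaSeq_tendsto_Gamma d))
    (mul_pos (Gamma_pos_of_pos hc) (Gamma_pos_of_pos hd)).ne'
  rw [← tendsto_add_atTop_iff_nat 1]
  refine hlim.congr' ?_
  filter_upwards [eventually_ne_atTop 0] with n hn
  exact GammaSeq_mul_div_GammaSeq_mul h hn

theorem four_div_four_add_le_Gamma_mul_div_Gamma_mul {α : ℝ} (h0 : 0 ≤ α) (h2 : α ≤ 2) :
    4 / (4 + α) ≤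
      Gamma (α + 3) * Gamma (α / 2 + 9 / 2) / (Gamma (α / 2 + 3) * Gamma (α + 9 / 2)) := by
  have hlim := tendsto_prod_div_mul_Gamma (a := α + 3) (b := α / 2 + 9 / 2)
    (c := α / 2 + 3) (d := α + 9 / 2) (by positivity) (by positivity) (by ring)
  refine ge_of_tendsto' hlim fun n => ?_
  set y := 3 + 3 * α / 4 with hy
  set ε : ℕ → ℝ := fun i => 3 * α / 4 / ((α + 3 + i) * (α / 2 + 9 / 2 + i)) with hε
  have hden : ∀ i : ℕ, 0 < (α + 3 + i) * (α / 2 + 9 / 2 + i) := fun i => by positivity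
  have hfactor : ∀ i : ℕ, (α / 2 + 3 + i) * (α + 9 / 2 + i) / ((α + 3 + i) * (α / 2 + 9 / 2 + i))
      = 1 - ε i := by
    intro i
    have := hden i
    simp only [hε]
    field_simp
    ring
  -- `(y + i)(y + i + 1) ≤ (α + 3 + i)(α/2 + 9/2 + i)` makes the sum of the `ε i` telescope.
  have hε_le : ∀ i : ℕ, ε i ≤ 3 * α / 4 * (1 / ((y + i) * (y + i + 1))) := by
    intro i
    rw [mul_one_div]
    apply div_le_div_of_nonneg_left (by positivity) (by positivity)
    have : (0 : ℝ) ≤ i := i.cast_nonneg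
    rw [hy]
    nlinarith [mul_nonneg h0 (sub_nonneg.2 h2)]
  have hε_nonneg : ∀ i ∈ range n, 0 ≤ ε i := fun i _ => div_nonneg (by positivity) (hden i).le
  have hε_le_one : ∀ i ∈ range n, ε i ≤ 1 := fun i _ => by
    rw [div_le_one (hden i)]
    have : (0 : ℝ) ≤ i := i.cast_nonneg
    nlinarith
  calc 4 / (4 + α) = 1 - 3 * α / 4 * (1 / y) := by rw [hy]; field_simp; ring
    _ ≤ 1 - 3 * α / 4 * ∑ i ∈ range n, 1 / ((y + i) * (y + i + 1)) := by
      gcongr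
      exact sum_range_one_div_mul_add_one_le (by positivity) n
    _ ≤ 1 - ∑ i ∈ range n, ε i := by
      rw [mul_sum]
      gcongr with i
      exact hε_le i
    _ ≤ ∏ i ∈ range n, (1 - ε i) := one_sub_sum_le_prod_one_sub _ hε_nonneg hε_le_one
    _ = _ := prod_congr rfl fun i _ => (hfactor i).symm

theorem two_mul_Gamma_mul_le_Gamma_mul {α : ℝ} (h0 : 0 ≤ α) (h2 : α ≤ 2) :
    2 * (Gamma (α / 2 + 2) * Gamma (α + 9 / 2)) ≤ Gamma (α + 3) * Gamma (α / 2 + 9 / 2) := by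
  have h := four_div_four_add_le_Gamma_mul_div_Gamma_mul h0 h2
  have hpos : 0 < (α / 2 + 2) * Gamma (α / 2 + 2) * Gamma (α + 9 / 2) :=
    mul_pos (mul_pos (by positivity) (Gamma_pos_of_pos (by positivity)))
      (Gamma_pos_of_pos (by positivity))
  rw [show α / 2 + 3 = α / 2 + 2 + 1 by ring, Gamma_add_one (by positivity),
    le_div_iff₀ hpos] at h
  calc 2 * (Gamma (α / 2 + 2) * Gamma (α + 9 / 2))
      = 4 / (4 + α) * ((α / 2 + 2) * Gamma (α / 2 + 2) * Gamma (α + 9 / 2)) := by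
        field_simp; ring
    _ ≤ _ := h

theorem stmt3 (α : ℝ) (hα : α ∈ Set.Icc (0:ℝ) 2) :
    4 * ((α + 7) / (α + 4)) *
      (Real.Gamma (α / 2 + 2) * Real.Gamma (α + 9 / 2)) /
        (Real.Gamma (α + 3) * Real.Gamma (α / 2 + 9 / 2)) ≤
      2 * (α + 7) / (α + 4) := by
  obtain ⟨h0, h2⟩ := hα
  have hpos : 0 < Gamma (α + 3) * Gamma (α / 2 + 9 / 2) :=
    mul_pos (Gamma_pos_of_pos (by positivity)) (Gamma_pos_of_pos (by positivity))
  calc 4 * ((α + 7) / (α + 4)) * (Gamma (α / 2 + 2) * Gamma (α + 9 / 2)) /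
        (Gamma (α + 3) * Gamma (α / 2 + 9 / 2))
      ≤ 4 * ((α + 7) / (α + 4)) * ((Gamma (α + 3) * Gamma (α / 2 + 9 / 2)) / 2) /
        (Gamma (α + 3) * Gamma (α / 2 + 9 / 2)) := by
        gcongr
        linarith [two_mul_Gamma_mul_le_Gamma_mul h0 h2]
    _ = 2 * (α + 7) / (α + 4) := by field_simp; ring
end

section
/- For all α ∈ [0,2]: Γ(α/2+2)·Γ(α+9/2) ≥ Γ(α/2+9/2)·Γ(α+2). -/
/-! Since `log ∘ Γ` is convex on `(0, ∞)`, moving two arguments of `Γ(x) Γ(y)` towards each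
other while keeping their sum fixed can only decrease the product. The pair `(α/2 + 9/2, α + 2)`
arises this way from `(α/2 + 2, α + 9/2)` as soon as `α ≥ 0`. -/

theorem ConvexOn.map_add_map_add_sub_le {𝕜 : Type*} [Field 𝕜] [LinearOrder 𝕜]
    [IsStrictOrderedRing 𝕜] {s : Set 𝕜} {f : 𝕜 → 𝕜} (hf : ConvexOn 𝕜 s f) {a b d : 𝕜}
    (ha : a ∈ s) (hd : d ∈ s) (hab : a ≤ b) (hbd : b ≤ d) :
    f b + f (a + d - b) ≤ f a + f d := by
  rcases (hab.trans hbd).eq_or_lt with rfl | had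
  · obtain rfl : b = a := le_antisymm hbd hab
    simp
  -- `b` and `a + d - b` are the convex combinations of `a` and `d` with swapped weights.
  set t := (d - b) / (d - a) with ht
  have ht0 : 0 ≤ t := div_nonneg (sub_nonneg.2 hbd) (sub_pos.2 had).le
  have ht1 : 0 ≤ 1 - t := by
    rw [sub_nonneg, ht, div_le_one (sub_pos.2 had)]; linarith
  have hb : t • a + (1 - t) • d = b := by
    simp only [smul_eq_mul, ht]; field_simp; ring
  have hc : (1 - t) • a + t • d = a + d - b := by
    simp only [smul_eq_mul, ht]; field_simp; ring
  have h₁ := hf.2 ha hd ht0 ht1 (by ring)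
  have h₂ := hf.2 ha hd ht1 ht0 (by ring)
  rw [hb] at h₁
  rw [hc] at h₂
  simp only [smul_eq_mul] at h₁ h₂
  linarith

theorem Real.Gamma_mul_Gamma_add_sub_le {a b d : ℝ} (ha : 0 < a) (hab : a ≤ b) (hbd : b ≤ d) :
    Real.Gamma b * Real.Gamma (a + d - b) ≤ Real.Gamma a * Real.Gamma d := by
  have hd : 0 < d := ha.trans_le (hab.trans hbd)
  have hGb := Real.Gamma_pos_of_pos (ha.trans_le hab)
  have hGc := Real.Gamma_pos_of_pos (show 0 < a + d - b by linarith)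
  have hGa := Real.Gamma_pos_of_pos ha
  have hGd := Real.Gamma_pos_of_pos hd
  rw [← Real.log_le_log_iff (by positivity) (by positivity),
    Real.log_mul hGb.ne' hGc.ne', Real.log_mul hGa.ne' hGd.ne']
  exact Real.convexOn_log_Gamma.map_add_map_add_sub_le ha hd hab hbd

theorem stmt6 (α : ℝ) (hα : α ∈ Set.Icc (0:ℝ) 2) :
    Real.Gamma (α / 2 + 9 / 2) * Real.Gamma (α + 2) ≤
      Real.Gamma (α / 2 + 2) * Real.Gamma (α + 9 / 2) := by
  have h := Real.Gamma_mul_Gamma_add_sub_le (a := α / 2 + 2) (b := α / 2 + 9 / 2)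
    (d := α + 9 / 2) (by linarith [hα.1]) (by linarith) (by linarith [hα.1])
  rwa [show α / 2 + 2 + (α + 9 / 2) - (α / 2 + 9 / 2) = α + 2 by ring] at h
end

section
/- For all α ∈ [0,2]: T(α) ≤ (90+19α)·(α+2)/(α+9), where T(α) = (90+19α)·Γ(α/2+2)·Γ(α+9/2) / (Γ(α/2+11/2)·Γ(α+2)). -/
/-!
With `β = α / 2` and `Γ (x + 1) = x Γ x` the inequality becomes
`2 Γ(β + 2) Γ(2β + 9/2) ≤ Γ(β + 9/2) Γ(2β + 3)`, i.e. `F(α) ≥ F(0) = 2`. Writing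
`b(β) = B(β + 3, 3/2)` for the Beta function, this reads `2 b(β) ≤ (β + 2) b(2β)`, and it follows
from two properties of Beta integrals:
* `b` is log-convex (Cauchy–Schwarz), so `b(β)² ≤ b(0) b(2β)`;
* `(β + 2) b(β) ≥ 2 b(0)` for `β ∈ [0, 1]`: integrate the secant inequality of the concave
  function `t ↦ t ^ β` against `(t - 2/3) t² (1 - t)^(-1/2) dt`.
-/

open MeasureTheory Set Real ProbabilityTheory

lemma cpow_mul_one_sub_cpow_eq_ofReal {a b t : ℝ} (ht : t ∈ Ioc (0 : ℝ) 1) :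
    (t : ℂ) ^ ((a : ℂ) - 1) * (1 - (t : ℂ)) ^ ((b : ℂ) - 1)
      = ((t ^ (a - 1) * (1 - t) ^ (b - 1) : ℝ) : ℂ) := by
  rw [Complex.ofReal_mul, Complex.ofReal_cpow ht.1.le, Complex.ofReal_cpow (by linarith [ht.2])]
  push_cast
  rfl

lemma integrableOn_rpow_mul_one_sub_rpow {a b : ℝ} (ha : 0 < a) (hb : 0 < b) :
    IntegrableOn (fun t : ℝ => t ^ (a - 1) * (1 - t) ^ (b - 1)) (Ioc 0 1) := by
  have h := Integrable.re (Complex.betaIntegral_convergent (u := a) (v := b) (by simpa)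
    (by simpa)).1
  refine IntegrableOn.congr_fun h (fun t ht => ?_) measurableSet_Ioc
  rw [cpow_mul_one_sub_cpow_eq_ofReal ht]
  exact Complex.ofReal_re _

lemma integral_rpow_mul_one_sub_rpow {a b : ℝ} (ha : 0 < a) (hb : 0 < b) :
    ∫ t in Ioc (0 : ℝ) 1, t ^ (a - 1) * (1 - t) ^ (b - 1) = beta a b := by
  rw [beta_eq_betaIntegralReal a b ha hb, Complex.betaIntegral,
    intervalIntegral.integral_of_le zero_le_one,
    setIntegral_congr_fun measurableSet_Ioc (fun t ht => cpow_mul_one_sub_cpow_eq_ofReal ht),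
    integral_complex_ofReal, Complex.ofReal_re]

lemma beta_add_one_left {x y : ℝ} (hx : x ≠ 0) (hxy : x + y ≠ 0) :
    beta (x + 1) y = x / (x + y) * beta x y := by
  rw [beta, beta, Real.Gamma_add_one hx, add_right_comm, Real.Gamma_add_one hxy]
  field_simp

lemma beta_add_one_right {x y : ℝ} (hy : y ≠ 0) (hxy : x + y ≠ 0) :
    beta x (y + 1) = y / (x + y) * beta x y := by
  rw [beta, beta, Real.Gamma_add_one hy, ← add_assoc, Real.Gamma_add_one hxy]
  field_simp

theorem sq_integral_mul_le {α : Type*} [MeasurableSpace α] {μ : Measure α} {f g : α → ℝ}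
    (hff : Integrable (fun x => f x * f x) μ) (hgg : Integrable (fun x => g x * g x) μ)
    (hfg : Integrable (fun x => f x * g x) μ) :
    (∫ x, f x * g x ∂μ) ^ 2 ≤ (∫ x, f x * f x ∂μ) * ∫ x, g x * g x ∂μ := by
  have hquad : ∀ s : ℝ, 0 ≤ (∫ x, f x * f x ∂μ) * (s * s) + 2 * (∫ x, f x * g x ∂μ) * s
      + ∫ x, g x * g x ∂μ := by
    intro s
    have hsq : 0 ≤ ∫ x, (s * s) * (f x * f x) + (2 * s) * (f x * g x) + g x * g x ∂μ :=
      integral_nonneg fun x => show 0 ≤ _ by nlinarith [sq_nonneg (s * f x + g x)]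
    rw [integral_add, integral_add, integral_const_mul, integral_const_mul] at hsq
    · linarith
    all_goals fun_prop
  have := discrim_le_zero hquad
  rw [discrim] at this
  linarith

lemma rpow_half_mul_rpow_half {s : ℝ} (hs : 0 ≤ s) (x : ℝ) :
    s ^ (x / 2) * s ^ (x / 2) = s ^ x := by
  rw [← Real.mul_rpow hs hs, ← pow_two, ← Real.rpow_two, ← Real.rpow_mul hs]
  ring_nf

theorem beta_sq_le_beta_mul_beta {a b c : ℝ} (ha : 0 < a) (hb : 0 < b) (hc : 0 < c) :
    beta ((a + b) / 2) c ^ 2 ≤ beta a c * beta b c := by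
  set F : ℝ → ℝ → ℝ := fun x t => t ^ ((x - 1) / 2) * (1 - t) ^ ((c - 1) / 2)
  have hF : ∀ {x y}, 0 < x → 0 < y →
      IntegrableOn (fun t => F x t * F y t) (Ioc 0 1) ∧
        ∫ t in Ioc (0 : ℝ) 1, F x t * F y t = beta ((x + y) / 2) c := by
    intro x y hx hy
    have heq : EqOn (fun t => F x t * F y t)
        (fun t => t ^ ((x + y) / 2 - 1) * (1 - t) ^ (c - 1)) (Ioc 0 1) := fun t ht => by
      simp only [F]
      rw [mul_mul_mul_comm, ← Real.rpow_add ht.1, rpow_half_mul_rpow_half (by linarith [ht.2])]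
      ring_nf
    exact ⟨(integrableOn_rpow_mul_one_sub_rpow (by positivity) hc).congr_fun heq.symm
        measurableSet_Ioc,
      (setIntegral_congr_fun measurableSet_Ioc heq).trans
        (integral_rpow_mul_one_sub_rpow (by positivity) hc)⟩
  have hcs := sq_integral_mul_le (hF ha ha).1 (hF hb hb).1 (hF ha hb).1
  rwa [(hF ha ha).2, (hF hb hb).2, (hF ha hb).2, add_self_div_two, add_self_div_two] at hcs

theorem ConcaveOn.sub_secant_mul_sub_nonneg {s : Set ℝ} {f : ℝ → ℝ} (hf : ConcaveOn ℝ s f)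
    {a b t : ℝ} (ha : a ∈ s) (hb : b ∈ s) (ht : t ∈ s) (hab : a < b) (htb : t ≤ b) :
    0 ≤ (f t - (f a + (f b - f a) / (b - a) * (t - a))) * (t - a) := by
  rcases eq_or_ne t a with rfl | hta
  · simp
  have hslope : (f b - f a) / (b - a) ≤ (f t - f a) / (t - a) := by
    have := hf.neg.secant_mono ha ht hb hta hab.ne' htb
    simp only [Pi.neg_apply, neg_sub_neg] at this
    rwa [← neg_sub (f t), ← neg_sub (f b), neg_div, neg_div, neg_le_neg_iff] at this
  have hsplit : (f t - (f a + (f b - f a) / (b - a) * (t - a))) * (t - a)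
      = ((f t - f a) / (t - a) - (f b - f a) / (b - a)) * (t - a) ^ 2 := by
    field_simp [sub_ne_zero.2 hta]
    ring
  rw [hsplit]
  exact mul_nonneg (sub_nonneg.2 hslope) (sq_nonneg _)

/-- Integrating the secant inequality, the secant's contribution reduces to `f b * ∫ (t - a) w`
because of the balance condition `hbal`. -/
theorem ConcaveOn.mul_integral_le_integral_mul {μ : Measure ℝ} {s : Set ℝ} {f w : ℝ → ℝ}
    (hf : ConcaveOn ℝ s f) {a b : ℝ} (ha : a ∈ s) (hb : b ∈ s) (hab : a < b)
    (hμ : ∀ᵐ t ∂μ, t ∈ s ∧ t ≤ b ∧ 0 ≤ w t)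
    (hf_int : Integrable (fun t => f t * (t - a) * w t) μ)
    (h_int : Integrable (fun t => (t - a) * w t) μ)
    (hbal_int : Integrable (fun t => (b - t) * (t - a) * w t) μ)
    (hbal : ∫ t, (b - t) * (t - a) * w t ∂μ = 0) :
    f b * ∫ t, (t - a) * w t ∂μ ≤ ∫ t, f t * (t - a) * w t ∂μ := by
  have hnonneg :
      0 ≤ ∫ t, (f t - (f a + (f b - f a) / (b - a) * (t - a))) * (t - a) * w t ∂μ := by
    refine integral_nonneg_of_ae ?_
    filter_upwards [hμ] with t ⟨hts, htb, hwt⟩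
    exact mul_nonneg (hf.sub_secant_mul_sub_nonneg ha hb hts hab htb) hwt
  have hexpand : ∀ t, (f t - (f a + (f b - f a) / (b - a) * (t - a))) * (t - a) * w t
      = f t * (t - a) * w t
        - ((f a - f b) / (b - a) * ((b - t) * (t - a) * w t) + f b * ((t - a) * w t)) := by
    intro t
    field_simp [(sub_pos.2 hab).ne']
    ring
  simp_rw [hexpand] at hnonneg
  rw [integral_sub, integral_add, integral_const_mul, integral_const_mul, hbal] at hnonneg
  · linarith
  all_goals fun_prop

lemma rpow_mul_sub_mul_kernel_eq {β t : ℝ} (ht : t ∈ Ioc (0 : ℝ) 1) :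
    t ^ β * (t - 2 / 3) * (t ^ (2 : ℝ) * (1 - t) ^ (-(1 / 2) : ℝ))
      = t ^ (β + 4 - 1) * (1 - t) ^ ((1 : ℝ) / 2 - 1)
        - 2 / 3 * (t ^ (β + 3 - 1) * (1 - t) ^ ((1 : ℝ) / 2 - 1)) := by
  rw [show β + 4 - 1 = β + 2 + 1 by ring, show β + 3 - 1 = β + 2 by ring,
    Real.rpow_add_one ht.1.ne', Real.rpow_add ht.1]
  norm_num
  ring

lemma integrableOn_rpow_mul_sub_mul_kernel {β : ℝ} (hβ : -3 < β) :
    IntegrableOn (fun t : ℝ => t ^ β * (t - 2 / 3) * (t ^ (2 : ℝ) * (1 - t) ^ (-(1 / 2) : ℝ)))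
      (Ioc 0 1) :=
  ((integrableOn_rpow_mul_one_sub_rpow (by linarith) (by norm_num)).sub
    ((integrableOn_rpow_mul_one_sub_rpow (by linarith) (by norm_num)).const_mul _)).congr_fun
    (fun _ ht => (rpow_mul_sub_mul_kernel_eq ht).symm) measurableSet_Ioc

lemma integral_rpow_mul_sub_mul_kernel {β : ℝ} (hβ : -3 < β) :
    ∫ t in Ioc (0 : ℝ) 1, t ^ β * (t - 2 / 3) * (t ^ (2 : ℝ) * (1 - t) ^ (-(1 / 2) : ℝ))
      = 2 / 3 * (β + 2) * beta (β + 3) (3 / 2) := by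
  rw [setIntegral_congr_fun measurableSet_Ioc (fun _ ht => rpow_mul_sub_mul_kernel_eq ht),
    integral_sub (integrableOn_rpow_mul_one_sub_rpow (by linarith) (by norm_num))
      ((integrableOn_rpow_mul_one_sub_rpow (by linarith) (by norm_num)).const_mul _),
    integral_const_mul, integral_rpow_mul_one_sub_rpow (by linarith) (by norm_num),
    integral_rpow_mul_one_sub_rpow (by linarith) (by norm_num),
    show β + 4 = β + 3 + 1 by ring, show (3 : ℝ) / 2 = 1 / 2 + 1 by norm_num,
    beta_add_one_left (by linarith) (by linarith), beta_add_one_right (by norm_num) (by linarith)]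
  field_simp
  rw [div_sub_one (by linarith)]
  ring

lemma one_sub_mul_sub_mul_kernel_eq {t : ℝ} (ht : t ∈ Ioc (0 : ℝ) 1) :
    (1 - t) * (t - 2 / 3) * (t ^ (2 : ℝ) * (1 - t) ^ (-(1 / 2) : ℝ))
      = t ^ ((4 : ℝ) - 1) * (1 - t) ^ ((3 : ℝ) / 2 - 1)
        - 2 / 3 * (t ^ ((3 : ℝ) - 1) * (1 - t) ^ ((3 : ℝ) / 2 - 1)) := by
  rw [show (4 : ℝ) - 1 = 2 + 1 by norm_num, show (3 : ℝ) / 2 - 1 = -(1 / 2) + 1 by norm_num,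
    show (3 : ℝ) - 1 = 2 by norm_num, Real.rpow_add_one ht.1.ne',
    Real.rpow_add_one' (by linarith [ht.2]) (by norm_num)]
  ring

lemma integrableOn_one_sub_mul_sub_mul_kernel :
    IntegrableOn (fun t : ℝ => (1 - t) * (t - 2 / 3) * (t ^ (2 : ℝ) * (1 - t) ^ (-(1 / 2) : ℝ)))
      (Ioc 0 1) :=
  ((integrableOn_rpow_mul_one_sub_rpow (by norm_num) (by norm_num)).sub
    ((integrableOn_rpow_mul_one_sub_rpow (by norm_num) (by norm_num)).const_mul _)).congr_fun
    (fun _ ht => (one_sub_mul_sub_mul_kernel_eq ht).symm) measurableSet_Ioc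

/-- `2 / 3` is the mean of `t` for the density proportional to `t² (1 - t)^(1/2)`. -/
lemma integral_one_sub_mul_sub_mul_kernel :
    ∫ t in Ioc (0 : ℝ) 1, (1 - t) * (t - 2 / 3) * (t ^ (2 : ℝ) * (1 - t) ^ (-(1 / 2) : ℝ))
      = 0 := by
  rw [setIntegral_congr_fun measurableSet_Ioc (fun _ ht => one_sub_mul_sub_mul_kernel_eq ht),
    integral_sub (integrableOn_rpow_mul_one_sub_rpow (by norm_num) (by norm_num))
      ((integrableOn_rpow_mul_one_sub_rpow (by norm_num) (by norm_num)).const_mul _),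
    integral_const_mul, integral_rpow_mul_one_sub_rpow (by norm_num) (by norm_num),
    integral_rpow_mul_one_sub_rpow (by norm_num) (by norm_num),
    show (4 : ℝ) = 3 + 1 by norm_num, beta_add_one_left (by norm_num) (by norm_num)]
  ring

theorem two_mul_beta_le_mul_beta {β : ℝ} (hβ₀ : 0 ≤ β) (hβ₁ : β ≤ 1) :
    2 * beta 3 (3 / 2) ≤ (β + 2) * beta (β + 3) (3 / 2) := by
  have h0_int := integrableOn_rpow_mul_sub_mul_kernel (β := 0) (by norm_num)
  have h0 := integral_rpow_mul_sub_mul_kernel (β := 0) (by norm_num)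
  simp only [Real.rpow_zero, one_mul] at h0_int h0
  have h := (Real.concaveOn_rpow hβ₀ hβ₁).mul_integral_le_integral_mul
    (μ := volume.restrict (Ioc 0 1)) (w := fun t => t ^ (2 : ℝ) * (1 - t) ^ (-(1 / 2) : ℝ))
    (a := 2 / 3) (b := 1) (by norm_num) (by norm_num) (by norm_num)
    (ae_restrict_of_forall_mem measurableSet_Ioc fun t ht =>
      ⟨ht.1.le, ht.2, mul_nonneg (rpow_nonneg ht.1.le _) (rpow_nonneg (sub_nonneg.2 ht.2) _)⟩)
    (integrableOn_rpow_mul_sub_mul_kernel (by linarith)) h0_int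
    integrableOn_one_sub_mul_sub_mul_kernel integral_one_sub_mul_sub_mul_kernel
  rw [Real.one_rpow, one_mul, h0, integral_rpow_mul_sub_mul_kernel (by linarith)] at h
  linarith

theorem two_mul_beta_le_mul_beta_two_mul {β : ℝ} (hβ₀ : 0 ≤ β) (hβ₁ : β ≤ 1) :
    2 * beta (β + 3) (3 / 2) ≤ (β + 2) * beta (2 * β + 3) (3 / 2) := by
  have hB₀ : 0 < beta 3 (3 / 2) := beta_pos (by norm_num) (by norm_num)
  have hlogconv : beta (β + 3) (3 / 2) ^ 2 ≤ beta 3 (3 / 2) * beta (2 * β + 3) (3 / 2) := by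
    simpa [show (3 + (2 * β + 3)) / 2 = β + 3 by ring] using
      beta_sq_le_beta_mul_beta (a := 3) (b := 2 * β + 3) (c := 3 / 2) (by norm_num) (by linarith)
        (by norm_num)
  refine le_of_mul_le_mul_left ?_ hB₀
  calc beta 3 (3 / 2) * (2 * beta (β + 3) (3 / 2))
      = 2 * beta 3 (3 / 2) * beta (β + 3) (3 / 2) := by ring
    _ ≤ (β + 2) * beta (β + 3) (3 / 2) * beta (β + 3) (3 / 2) :=
        mul_le_mul_of_nonneg_right (two_mul_beta_le_mul_beta hβ₀ hβ₁)
          (beta_pos (by linarith) (by norm_num)).le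
    _ = (β + 2) * beta (β + 3) (3 / 2) ^ 2 := by ring
    _ ≤ (β + 2) * (beta 3 (3 / 2) * beta (2 * β + 3) (3 / 2)) :=
        mul_le_mul_of_nonneg_left hlogconv (by linarith)
    _ = beta 3 (3 / 2) * ((β + 2) * beta (2 * β + 3) (3 / 2)) := by ring

theorem two_mul_Gamma_mul_Gamma_le {β : ℝ} (hβ₀ : 0 ≤ β) (hβ₁ : β ≤ 1) :
    2 * Gamma (β + 2) * Gamma (2 * β + 9 / 2) ≤ Gamma (β + 9 / 2) * Gamma (2 * β + 3) := by
  have h := two_mul_beta_le_mul_beta_two_mul hβ₀ hβ₁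
  rw [beta, beta, show β + 3 = β + 2 + 1 by ring, Real.Gamma_add_one (by linarith),
    show β + 2 + 1 + 3 / 2 = β + 9 / 2 by ring,
    show 2 * β + 3 + 3 / 2 = 2 * β + 9 / 2 by ring] at h
  have hc : 0 < (β + 2) * Gamma (3 / 2) := mul_pos (by linarith) (Gamma_pos_of_pos (by norm_num))
  have h' : 2 * Gamma (β + 2) / Gamma (β + 9 / 2) ≤ Gamma (2 * β + 3) / Gamma (2 * β + 9 / 2) := by
    refine le_of_mul_le_mul_left ?_ hc
    calc _ = 2 * ((β + 2) * Gamma (β + 2) * Gamma (3 / 2) / Gamma (β + 9 / 2)) := by ring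
      _ ≤ _ := h
      _ = _ := by ring
  rw [div_le_div_iff₀ (Gamma_pos_of_pos (by linarith)) (Gamma_pos_of_pos (by linarith))] at h'
  linarith

theorem stmt8 (α : ℝ) (hα : α ∈ Set.Icc (0:ℝ) 2) :
    (90 + 19 * α) * Real.Gamma (α / 2 + 2) * Real.Gamma (α + 9 / 2) /
        (Real.Gamma (α / 2 + 11 / 2) * Real.Gamma (α + 2)) ≤
      (90 + 19 * α) * (α + 2) / (α + 9) := by
  obtain ⟨hα₀, hα₂⟩ := hα
  have key := two_mul_Gamma_mul_Gamma_le (β := α / 2) (by linarith) (by linarith)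
  rw [show 2 * (α / 2) = α by ring, show α + 3 = α + 2 + 1 by ring,
    Real.Gamma_add_one (by linarith)] at key
  rw [show α / 2 + 11 / 2 = α / 2 + 9 / 2 + 1 by ring, Real.Gamma_add_one (by linarith),
    div_le_div_iff₀ (by positivity) (by linarith)]
  have := mul_le_mul_of_nonneg_left key (by positivity : (0 : ℝ) ≤ (90 + 19 * α) * (α / 2 + 9 / 2))
  linarith
end

section
/- For all α ∈ (0,2]: g_α((90+19α)·2/(α+9)) = (1/300)·α²·(95α³+237α²−6300α−26568)/((α+7)(α+9)²) < 0. -/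
theorem stmt9 (α : ℝ) (hα : α ∈ Set.Ioc (0:ℝ) 2)
    (a b g : ℝ → ℝ)
    (ha : a = fun α => (14 - 3 * α) * (3 + α) / (1200 * (7 + α)))
    (hb : b = fun α => -(1 / 120) * (-α ^ 3 + 3 * α ^ 2 + 64 * α + 168) / (7 + α))
    (hg : g = fun t => a α * t ^ 2 + b α * t + α + 2) :
    g ((90 + 19 * α) * 2 / (α + 9)) =
      (1 / 300) * α ^ 2 * (95 * α ^ 3 + 237 * α ^ 2 - 6300 * α - 26568) /
        ((α + 7) * (α + 9) ^ 2) ∧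
    g ((90 + 19 * α) * 2 / (α + 9)) < 0 := by
  obtain ⟨h0, h2⟩ := hα
  have h7 : (7:ℝ) + α ≠ 0 := by linarith
  have h9 : α + 9 ≠ 0 := by linarith
  have heq : g ((90 + 19 * α) * 2 / (α + 9)) =
      (1 / 300) * α ^ 2 * (95 * α ^ 3 + 237 * α ^ 2 - 6300 * α - 26568) /
        ((α + 7) * (α + 9) ^ 2) := by
    subst ha hb hg
    field_simp
    ring
  refine ⟨heq, ?_⟩
  rw [heq]
  have hnum : 95 * α ^ 3 + 237 * α ^ 2 - 6300 * α - 26568 < 0 := by nlinarith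
  have hden : 0 < (α + 7) * (α + 9) ^ 2 := by positivity
  have : 0 < α ^ 2 := by positivity
  rw [div_neg_iff]
  right
  constructor
  · nlinarith
  · exact hden
end

section
/- For all α ∈ [0,2]: b(α)² − 4a(α)(α+2) ≥ 0, where a(α) = (14−3α)(3+α)/(1200(7+α)) and b(α) = −(1/120)(−α³+3α²+64α+168)/(7+α). -/
theorem stmt13 (α : ℝ) (hα : α ∈ Set.Icc (0:ℝ) 2)
    (a b : ℝ → ℝ)
    (ha : a = fun α => (14 - 3 * α) * (3 + α) / (1200 * (7 + α)))
    (hb : b = fun α => -(1 / 120) * (-α ^ 3 + 3 * α ^ 2 + 64 * α + 168) / (7 + α)) :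
    0 ≤ b α ^ 2 - 4 * a α * (α + 2) := by
  obtain ⟨h0, h2⟩ := hα
  subst ha hb
  simp only
  have h7 : (0:ℝ) < 7 + α := by linarith
  rw [sub_nonneg]
  have key : 4 * ((14 - 3 * α) * (3 + α) / (1200 * (7 + α))) * (α + 2) = (4 * ((14 - 3 * α) * (3 + α)) * (α + 2) * (7 + α)) / (1200 * (7 + α) ^ 2) := by field_simp
  rw [key, div_pow, mul_pow, div_le_div_iff₀ (by positivity) (by positivity)]
  ring_nf
  nlinarith [sq_nonneg α, sq_nonneg (α - 2), sq_nonneg (α*α), mul_nonneg h0 h0, mul_nonneg (mul_nonneg h0 h0) h0, sq_nonneg (α*(α-2)), sq_nonneg (α*α*(α-2))]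
end

section
/- The function r(α) = (1/2)Ψ(α/2+2) + Ψ(α+9/2) − (1/2)Ψ(α/2+11/2) − Ψ(α+2) satisfies r'(α) < −0.1795 for all α ∈ [0, α*], where α* ≈ 0.56 is the unique positive root in [0,2] of 893α⁴+10367α³+36800α²+32472α−13608 = 0. -/
/-!
Differentiating the Bohr–Mollerup approximations `logGammaSeq` of `log Γ` twice shows that
`Γ'/Γ` has derivative `trigamma x = ∑ₘ (x + m)⁻²` on `(0, ∞)`, so `r'(α)` equals
`¼ trigamma (α/2 + 2) + trigamma (α + 9/2) - ¼ trigamma (α/2 + 11/2) - trigamma (α + 2)`.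
Since `trigamma` is decreasing and `αstar < 0.3047`, `r'(α)` is bounded on `[0, αstar]` by the
value of the same expression with the first two arguments at `α = 0` and the last two at
`α = 0.3047`. That number is estimated by summing ten terms of each series and bounding the tails
by telescoping sums, `(b + 1/2)⁻² ≤ b⁻¹ - (b + 1)⁻¹` and its Euler–Maclaurin refinement
`φ b - φ (b + 1) ≤ (b + 1/2)⁻²` with `φ b = b⁻¹ - (12 b³)⁻¹`.
-/

open Real Filter Topology Finset

theorem tsum_le_of_le_sub_succ {u f : ℕ → ℝ} (hu : Summable u) (hf : Tendsto f atTop (𝓝 0))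
    (h : ∀ k, u k ≤ f k - f (k + 1)) : ∑' k, u k ≤ f 0 := by
  refine le_of_tendsto_of_tendsto' hu.hasSum.tendsto_sum_nat
    (by simpa using tendsto_const_nhds.sub hf) fun n => ?_
  rw [← sum_range_sub']
  exact sum_le_sum fun k _ => h k

theorem le_tsum_of_sub_succ_le {u f : ℕ → ℝ} (hu : Summable u) (hf : Tendsto f atTop (𝓝 0))
    (h : ∀ k, f k - f (k + 1) ≤ u k) : f 0 ≤ ∑' k, u k := by
  refine le_of_tendsto_of_tendsto' (by simpa using tendsto_const_nhds.sub hf)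
    hu.hasSum.tendsto_sum_nat fun n => ?_
  rw [← sum_range_sub']
  exact sum_le_sum fun k _ => h k

theorem tendsto_inv_add_nat (c : ℝ) : Tendsto (fun k : ℕ => (c + k)⁻¹) atTop (𝓝 0) :=
  (tendsto_atTop_add_const_left _ c tendsto_natCast_atTop_atTop).inv_tendsto_atTop

theorem inv_add_half_sq_le_inv_sub_inv_add_one {b : ℝ} (hb : 0 < b) :
    ((b + 1 / 2) ^ 2)⁻¹ ≤ b⁻¹ - (b + 1)⁻¹ := by
  rw [inv_sub_inv hb.ne' (by positivity), add_sub_cancel_left, one_div (b * (b + 1))]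
  exact inv_anti₀ (by positivity) (by nlinarith)

theorem inv_sub_inv_cube_sub_le_inv_add_half_sq {b : ℝ} (hb : 0 < b) :
    b⁻¹ - (12 * b ^ 3)⁻¹ - ((b + 1)⁻¹ - (12 * (b + 1) ^ 3)⁻¹)
      ≤ ((b + 1 / 2) ^ 2)⁻¹ := by
  rw [← sub_nonneg]
  field_simp
  ring_nf
  positivity

noncomputable def trigamma (x : ℝ) : ℝ := ∑' m : ℕ, ((x + m) ^ 2)⁻¹

theorem summable_inv_add_nat_sq (x : ℝ) : Summable fun m : ℕ => ((x + m) ^ 2)⁻¹ :=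
  ((summable_one_div_nat_add_rpow x 2).mpr one_lt_two).congr fun m => by
    rw [rpow_two, sq_abs, add_comm, one_div]

theorem trigamma_le_trigamma {x y : ℝ} (hx : 0 < x) (hxy : x ≤ y) : trigamma y ≤ trigamma x :=
  Summable.tsum_le_tsum (fun _ => inv_anti₀ (by positivity) (by gcongr))
    (summable_inv_add_nat_sq y) (summable_inv_add_nat_sq x)

theorem trigamma_eq_sum_range_add (x : ℝ) (N : ℕ) :
    trigamma x = ∑ m ∈ range N, ((x + m) ^ 2)⁻¹ + trigamma (x + N) := by
  rw [trigamma, trigamma, ← (summable_inv_add_nat_sq x).sum_add_tsum_nat_add N]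
  congr 1
  refine tsum_congr fun m => ?_
  push_cast
  ring_nf

theorem trigamma_le {x : ℝ} (hx : 1 / 2 < x) : trigamma x ≤ (x - 1 / 2)⁻¹ := by
  have := tsum_le_of_le_sub_succ (summable_inv_add_nat_sq x) (tendsto_inv_add_nat (x - 1 / 2))
    fun k => ?_
  · simpa [trigamma] using this
  · have := inv_add_half_sq_le_inv_sub_inv_add_one (b := x - 1 / 2 + k)
      (by have := k.cast_nonneg (α := ℝ); linarith)
    push_cast
    convert this using 3 <;> ring

theorem le_trigamma {x : ℝ} (hx : 1 / 2 < x) :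
    (x - 1 / 2)⁻¹ - (12 * (x - 1 / 2) ^ 3)⁻¹ ≤ trigamma x := by
  have hlim : Tendsto (fun k : ℕ => (x - 1 / 2 + k)⁻¹ - (12 * (x - 1 / 2 + k) ^ 3)⁻¹) atTop
      (𝓝 0) := by
    have h := tendsto_inv_add_nat (x - 1 / 2)
    simpa using h.sub ((h.pow 3).mul_const 12⁻¹)
  have := le_tsum_of_sub_succ_le (summable_inv_add_nat_sq x) hlim fun k => ?_
  · simpa [trigamma] using this
  · have := inv_sub_inv_cube_sub_le_inv_add_half_sq (b := x - 1 / 2 + k)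
      (by have := k.cast_nonneg (α := ℝ); linarith)
    push_cast
    convert this using 3 <;> ring

/-- The four arguments are those of `r'` at `α = 0` (first two) and `α = 3047/10000` (last two);
the margin left by ten terms and the tail bounds is about `5 · 10⁻⁵`. -/
theorem trigamma_combination_lt :
    trigamma 2 / 4 + trigamma (9 / 2) - trigamma (113047 / 20000) / 4
      - trigamma (23047 / 10000) < -1795 / 10000 := by
  rw [trigamma_eq_sum_range_add 2 10, trigamma_eq_sum_range_add (9 / 2) 10,
    trigamma_eq_sum_range_add (113047 / 20000) 10, trigamma_eq_sum_range_add (23047 / 10000) 10]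
  have h₁ := trigamma_le (x := 2 + (10 : ℕ)) (by norm_num)
  have h₂ := trigamma_le (x := 9 / 2 + (10 : ℕ)) (by norm_num)
  have h₃ := le_trigamma (x := 113047 / 20000 + (10 : ℕ)) (by norm_num)
  have h₄ := le_trigamma (x := 23047 / 10000 + (10 : ℕ)) (by norm_num)
  norm_num [sum_range_succ] at h₁ h₂ h₃ h₄ ⊢
  linarith

noncomputable def digammaSeries (x : ℝ) : ℝ :=
  -eulerMascheroniConstant + ∑' m : ℕ, (((m : ℝ) + 1)⁻¹ - (x + m)⁻¹)

theorem hasDerivAt_inv_add_one_sub_inv_add (m : ℕ) {x : ℝ} (hx : 0 < x) :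
    HasDerivAt (fun y : ℝ => ((m : ℝ) + 1)⁻¹ - (y + m)⁻¹) ((x + m) ^ 2)⁻¹ x := by
  have h := (((hasDerivAt_id x).add_const (m : ℝ)).inv (by positivity)).const_sub
    ((m : ℝ) + 1)⁻¹
  rwa [neg_div, neg_neg, one_div] at h

theorem hasDerivAt_digammaSeries {x : ℝ} (hx : 0 < x) :
    HasDerivAt digammaSeries (trigamma x) x := by
  obtain ⟨a, ha, ha₁, hax⟩ : ∃ a : ℝ, 0 < a ∧ a < 1 ∧ a < x :=
    ⟨min x 1 / 2, by positivity, by linarith [min_le_right x 1], by linarith [min_le_left x 1]⟩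
  refine HasDerivAt.const_add _ <| hasDerivAt_tsum_of_isPreconnected
    (summable_inv_add_nat_sq a) isOpen_Ioi isPreconnected_Ioi
    (fun m y hy => hasDerivAt_inv_add_one_sub_inv_add m (ha.trans hy)) (fun m y hy => ?_)
    (y₀ := 1) ha₁ (by simp [add_comm]) hax
  rw [norm_inv, norm_pow, Real.norm_of_nonneg (by linarith [ha.trans hy.out] : 0 ≤ y + m)]
  exact inv_anti₀ (by positivity) (by gcongr; exact hy.out.le)

theorem abs_inv_add_one_sub_inv_add_le {a y : ℝ} (m : ℕ) (ha : 0 < a) (ha₁ : a ≤ 1)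
    (hy : a ≤ y) : |((m : ℝ) + 1)⁻¹ - (y + m)⁻¹| ≤ (y + 1) * ((a + m) ^ 2)⁻¹ := by
  have hm := m.cast_nonneg (α := ℝ)
  have hy₀ : 0 < y + m := by linarith
  rw [inv_sub_inv (by positivity) hy₀.ne', abs_div, abs_of_pos (mul_pos (by positivity) hy₀),
    ← div_eq_mul_inv]
  refine div_le_div₀ (by linarith) ?_ (by positivity) ?_
  · rw [abs_le]; constructor <;> linarith
  · rw [sq]; exact mul_le_mul (by linarith) (by linarith) (by positivity) (by positivity)

theorem tendsto_log_sub_harmonic_succ :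
    Tendsto (fun n : ℕ => log n - harmonic (n + 1)) atTop (𝓝 (-eulerMascheroniConstant)) := by
  have h := (tendsto_harmonic_sub_log.comp (tendsto_add_atTop_nat 1)).neg.sub
    tendsto_log_nat_add_one_sub_log
  rw [sub_zero] at h
  refine h.congr fun n => ?_
  simp only [Function.comp_apply, Nat.cast_add, Nat.cast_one]
  ring

theorem tendstoUniformlyOn_log_sub_sum_inv {a b : ℝ} (ha : 0 < a) (ha₁ : a ≤ 1) :
    TendstoUniformlyOn (fun (n : ℕ) (y : ℝ) => log n - ∑ m ∈ range (n + 1), (y + m)⁻¹)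
      digammaSeries atTop (Set.Ioo a b) := by
  have hseries := tendstoUniformlyOn_tsum_nat ((summable_inv_add_nat_sq a).mul_left (b + 1))
    (f := fun (m : ℕ) (y : ℝ) => ((m : ℝ) + 1)⁻¹ - (y + m)⁻¹) (s := Set.Ioo a b)
    fun m y hy => (abs_inv_add_one_sub_inv_add_le m ha ha₁ hy.1.le).trans <| by
      gcongr; exact hy.2.le
  have hshift : TendstoUniformlyOn
      (fun (n : ℕ) (y : ℝ) => ∑ m ∈ range (n + 1), (((m : ℝ) + 1)⁻¹ - (y + m)⁻¹))
      (fun y => ∑' m : ℕ, (((m : ℝ) + 1)⁻¹ - (y + m)⁻¹)) atTop (Set.Ioo a b) :=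
    fun u hu => (tendsto_add_atTop_nat 1).eventually (hseries u hu)
  refine ((tendsto_log_sub_harmonic_succ.tendstoUniformlyOn_const _).add hshift).congr ?_
  filter_upwards with n y _
  simp only [Pi.add_apply]
  push_cast [harmonic, sum_sub_distrib]
  ring

theorem hasDerivAt_logGammaSeq (n : ℕ) {x : ℝ} (hx : 0 < x) :
    HasDerivAt (fun y : ℝ => BohrMollerup.logGammaSeq y n)
      (log n - ∑ m ∈ range (n + 1), (x + m)⁻¹) x := by
  have hlog : HasDerivAt (fun y => ∑ m ∈ range (n + 1), log (y + m))
      (∑ m ∈ range (n + 1), (x + m)⁻¹) x :=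
    HasDerivAt.fun_sum fun m _ => by
      simpa using ((hasDerivAt_id x).add_const (m : ℝ)).log (by positivity)
  exact ((hasDerivAt_mul_const (log n)).add_const _).sub hlog

theorem hasDerivAt_log_Gamma {x : ℝ} (hx : 0 < x) :
    HasDerivAt (fun y => log (Gamma y)) (digammaSeries x) x := by
  obtain ⟨a, ha, ha₁, hax⟩ : ∃ a : ℝ, 0 < a ∧ a < 1 ∧ a < x :=
    ⟨min x 1 / 2, by positivity, by linarith [min_le_right x 1], by linarith [min_le_left x 1]⟩
  exact hasDerivAt_of_tendstoUniformlyOn isOpen_Ioo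
    (tendstoUniformlyOn_log_sub_sum_inv ha ha₁.le (b := x + 1))
    (Eventually.of_forall fun n y hy => hasDerivAt_logGammaSeq n (ha.trans hy.1))
    (fun y hy => BohrMollerup.tendsto_log_gamma (ha.trans hy.1)) ⟨hax, by linarith⟩

theorem deriv_Gamma_div_Gamma_eq_digammaSeries {x : ℝ} (hx : 0 < x) :
    deriv Gamma x / Gamma x = digammaSeries x := by
  have hΓ : DifferentiableAt ℝ Gamma x :=
    differentiableAt_Gamma fun m => by linarith [m.cast_nonneg (α := ℝ)]
  exact (hΓ.hasDerivAt.log (Gamma_pos_of_pos hx).ne').unique (hasDerivAt_log_Gamma hx)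

theorem HasDerivAt.deriv_Gamma_div_Gamma {f : ℝ → ℝ} {f' x : ℝ} (hf : HasDerivAt f f' x)
    (hx : 0 < f x) :
    HasDerivAt (fun y => _root_.deriv Gamma (f y) / Gamma (f y)) (trigamma (f x) * f') x := by
  refine HasDerivAt.comp x (h₂ := fun y => _root_.deriv Gamma y / Gamma y) ?_ hf
  exact (hasDerivAt_digammaSeries hx).congr_of_eventuallyEq <|
    (eventually_gt_nhds hx).mono fun _ hy => deriv_Gamma_div_Gamma_eq_digammaSeries hy

theorem lt_of_quartic_eq_zero {a : ℝ}
    (h : 893 * a ^ 4 + 10367 * a ^ 3 + 36800 * a ^ 2 + 32472 * a - 13608 = 0) :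
    a < 3047 / 10000 := by
  by_contra! ha
  have h₂ : (3047 / 10000 : ℝ) ^ 2 ≤ a ^ 2 := by gcongr
  have h₃ : (3047 / 10000 : ℝ) ^ 3 ≤ a ^ 3 := by gcongr
  have h₄ : (3047 / 10000 : ℝ) ^ 4 ≤ a ^ 4 := by gcongr
  linarith

theorem stmt15_general
    (Ψ r : ℝ → ℝ)
    (hΨ : Ψ = fun x => deriv Real.Gamma x / Real.Gamma x)
    (hr : r = fun α =>
      (1 / 2) * Ψ (α / 2 + 2) + Ψ (α + 9 / 2) - (1 / 2) * Ψ (α / 2 + 11 / 2) - Ψ (α + 2))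
    (αstar : ℝ)
    (h3 : 893 * αstar ^ 4 + 10367 * αstar ^ 3 + 36800 * αstar ^ 2 + 32472 * αstar - 13608 = 0) :
    ∀ α ∈ Set.Icc 0 αstar, deriv r α < -0.1795 := by
  subst hΨ hr
  rintro α ⟨hα₀, hα⟩
  have hαstar := lt_of_quartic_eq_zero h3
  have hhalf : HasDerivAt (fun a : ℝ => a / 2) (1 / 2) α := (hasDerivAt_id' α).div_const 2
  have hΨ₁ := ((hhalf.add_const 2).deriv_Gamma_div_Gamma (by positivity)).const_mul (1 / 2)
  have hΨ₂ := ((hasDerivAt_id' α).add_const (9 / 2)).deriv_Gamma_div_Gamma (by positivity)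
  have hΨ₃ := ((hhalf.add_const (11 / 2)).deriv_Gamma_div_Gamma (by positivity)).const_mul (1 / 2)
  have hΨ₄ := ((hasDerivAt_id' α).add_const 2).deriv_Gamma_div_Gamma (by positivity)
  refine (((hΨ₁.fun_add hΨ₂).fun_sub hΨ₃).fun_sub hΨ₄).deriv.trans_lt ?_
  have h₁ := trigamma_le_trigamma (x := 2) (y := α / 2 + 2) (by norm_num) (by linarith)
  have h₂ := trigamma_le_trigamma (x := 9 / 2) (y := α + 9 / 2) (by norm_num) (by linarith)
  have h₃ := trigamma_le_trigamma (x := α / 2 + 11 / 2) (y := 113047 / 20000) (by positivity)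
    (by linarith)
  have h₄ := trigamma_le_trigamma (x := α + 2) (y := 23047 / 10000) (by positivity) (by linarith)
  norm_num
  linarith [trigamma_combination_lt]

theorem stmt15
    (Ψ r : ℝ → ℝ)
    (hΨ : Ψ = fun x => deriv Real.Gamma x / Real.Gamma x)
    (hr : r = fun α =>
      (1 / 2) * Ψ (α / 2 + 2) + Ψ (α + 9 / 2) - (1 / 2) * Ψ (α / 2 + 11 / 2) - Ψ (α + 2))
    (αstar : ℝ) (h1 : αstar ∈ Set.Icc (0:ℝ) 2) (h2 : 0 < αstar)
    (h3 : 893 * αstar ^ 4 + 10367 * αstar ^ 3 + 36800 * αstar ^ 2 + 32472 * αstar - 13608 = 0) :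
    ∀ α ∈ Set.Icc 0 αstar, deriv r α < -0.1795 :=
  stmt15_general Ψ r hΨ hr αstar h3
end

section
/- For all α ∈ (0, 2]: Γ(α/2+2)·Γ(α+9/2)/(Γ(α/2+11/2)·Γ(α+2)) < (−b(α) + √(b(α)² − 4a(α)(α+2))) / (2a(α)(90+19α)), where a(α) = (14−3α)(3+α)/(1200(7+α)) and b(α) = −(1/120)(−α³+3α²+64α+168)/(7+α). -/
open Real Set

lemma gautschi_up' {t θ : ℝ} (ht : 0 < t) (hθ0 : 0 ≤ θ) (hθ1 : θ ≤ 1) :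
    Real.Gamma (t + θ) ≤ Real.Gamma t * t ^ θ := by
  have h1 : (Real.log ∘ Real.Gamma) ((1-θ) • t + θ • (t+1)) ≤
      (1-θ) • (Real.log ∘ Real.Gamma) t + θ • (Real.log ∘ Real.Gamma) (t+1) :=
    Real.convexOn_log_Gamma.2 (mem_Ioi.2 ht) (mem_Ioi.2 (by linarith)) (by linarith) hθ0
      (by ring)
  simp only [Function.comp_apply, smul_eq_mul] at h1
  have harg : (1-θ) * t + θ * (t+1) = t + θ := by ring
  rw [harg, Real.Gamma_add_one ht.ne',
    Real.log_mul ht.ne' (Real.Gamma_pos_of_pos ht).ne'] at h1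
  have h2 : Real.log (Real.Gamma (t+θ)) ≤ Real.log (Real.Gamma t) + θ * Real.log t := by
    nlinarith [h1]
  have h3 : Real.Gamma (t+θ) = Real.exp (Real.log (Real.Gamma (t+θ))) :=
    (Real.exp_log (Real.Gamma_pos_of_pos (by linarith))).symm
  rw [h3]
  calc Real.exp (Real.log (Real.Gamma (t+θ)))
      ≤ Real.exp (Real.log (Real.Gamma t) + θ * Real.log t) := Real.exp_le_exp.2 h2
    _ = Real.Gamma t * t ^ θ := by
        rw [Real.exp_add, Real.exp_log (Real.Gamma_pos_of_pos ht),
          Real.rpow_def_of_pos ht, mul_comm (Real.log t) θ]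

lemma gautschi_low' {t θ : ℝ} (ht : 0 < t) (hθ0 : 0 ≤ θ) (hθ1 : θ ≤ 1) :
    Real.Gamma t * t ≤ Real.Gamma (t + θ) * (t + θ) ^ (1 - θ) := by
  have htθ : 0 < t + θ := by linarith
  have h1 : (Real.log ∘ Real.Gamma) (θ • (t+θ) + (1-θ) • (t+θ+1)) ≤
      θ • (Real.log ∘ Real.Gamma) (t+θ) + (1-θ) • (Real.log ∘ Real.Gamma) (t+θ+1) :=
    Real.convexOn_log_Gamma.2 (mem_Ioi.2 htθ) (mem_Ioi.2 (by linarith)) hθ0 (by linarith)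
      (by ring)
  simp only [Function.comp_apply, smul_eq_mul] at h1
  have harg : θ * (t+θ) + (1-θ) * (t+θ+1) = t + 1 := by ring
  rw [harg, Real.Gamma_add_one ht.ne', Real.Gamma_add_one htθ.ne',
    Real.log_mul ht.ne' (Real.Gamma_pos_of_pos ht).ne',
    Real.log_mul htθ.ne' (Real.Gamma_pos_of_pos htθ).ne'] at h1
  have h2 : Real.log (Real.Gamma t * t) ≤
      Real.log (Real.Gamma (t+θ)) + (1-θ) * Real.log (t+θ) := by
    rw [Real.log_mul (Real.Gamma_pos_of_pos ht).ne' ht.ne']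
    nlinarith [h1]
  have hL : 0 < Real.Gamma t * t := mul_pos (Real.Gamma_pos_of_pos ht) ht
  have h3 := Real.exp_le_exp.2 h2
  rw [Real.exp_log hL, Real.exp_add, Real.exp_log (Real.Gamma_pos_of_pos htθ)] at h3
  rw [Real.rpow_def_of_pos htθ, mul_comm (Real.log (t+θ)) (1-θ)]
  exact h3

noncomputable def Phi (α y : ℝ) : ℝ :=
  Real.Gamma (y + (5/2 + α)) * Real.Gamma (y + α/2) /
    (Real.Gamma (y + (5/2 + α/2)) * Real.Gamma (y + α))

lemma Phi_pos {α y : ℝ} (hα : 0 < α) (hy : 0 < y) : 0 < Phi α y := by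
  unfold Phi
  have g1 := Real.Gamma_pos_of_pos (show (0:ℝ) < y + (5/2 + α) by linarith)
  have g2 := Real.Gamma_pos_of_pos (show (0:ℝ) < y + α/2 by linarith)
  have g3 := Real.Gamma_pos_of_pos (show (0:ℝ) < y + (5/2 + α/2) by linarith)
  have g4 := Real.Gamma_pos_of_pos (show (0:ℝ) < y + α by linarith)
  positivity

lemma Phi_step {α y : ℝ} (hα : 0 < α) (hy : 0 < y) :
    Phi α y = ((y + (5/2 + α/2)) * (y + α)) / ((y + (5/2 + α)) * (y + α/2)) * Phi α (y+1) := by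
  unfold Phi
  have p1 : (0:ℝ) < y + (5/2 + α) := by linarith
  have p2 : (0:ℝ) < y + α/2 := by linarith
  have p3 : (0:ℝ) < y + (5/2 + α/2) := by linarith
  have p4 : (0:ℝ) < y + α := by linarith
  have g1 : Real.Gamma (y + 1 + (5/2 + α)) = (y + (5/2+α)) * Real.Gamma (y + (5/2+α)) := by
    rw [show y + 1 + (5/2 + α) = (y + (5/2+α)) + 1 by ring, Real.Gamma_add_one p1.ne']
  have g2 : Real.Gamma (y + 1 + α/2) = (y + α/2) * Real.Gamma (y + α/2) := by
    rw [show y + 1 + α/2 = (y + α/2) + 1 by ring, Real.Gamma_add_one p2.ne']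
  have g3 : Real.Gamma (y + 1 + (5/2 + α/2)) = (y + (5/2+α/2)) * Real.Gamma (y + (5/2+α/2)) := by
    rw [show y + 1 + (5/2 + α/2) = (y + (5/2+α/2)) + 1 by ring, Real.Gamma_add_one p3.ne']
  have g4 : Real.Gamma (y + 1 + α) = (y + α) * Real.Gamma (y + α) := by
    rw [show y + 1 + α = (y + α) + 1 by ring, Real.Gamma_add_one p4.ne']
  rw [g1, g2, g3, g4]
  have n1 := (Real.Gamma_pos_of_pos p1).ne'
  have n2 := (Real.Gamma_pos_of_pos p2).ne'
  have n3 := (Real.Gamma_pos_of_pos p3).ne'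
  have n4 := (Real.Gamma_pos_of_pos p4).ne'
  field_simp

noncomputable def vv (α y : ℝ) : ℝ :=
  (y + (13/20 + 271/200 * α)) / (y + (13/20 + 21/200 * α))

lemma vv_pos {α y : ℝ} (hα : 0 < α) (hy : 0 < y) : 0 < vv α y := by
  unfold vv
  have h1 : (0:ℝ) < y + (13/20 + 271/200*α) := by linarith
  have h2 : (0:ℝ) < y + (13/20 + 21/200*α) := by linarith
  positivity

lemma step_v {α y : ℝ} (hα : 0 < α) (hy : 6 ≤ y) :
    ((y + (5/2 + α/2)) * (y + α)) / ((y + (5/2 + α)) * (y + α/2)) * vv α (y+1) ≤ vv α y := by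
  unfold vv
  have p1 : (0:ℝ) < y + (5/2 + α) := by linarith
  have p2 : (0:ℝ) < y + α/2 := by linarith
  have p5 : (0:ℝ) < y + 1 + (13/20 + 21/200*α) := by linarith
  have p6 : (0:ℝ) < y + (13/20 + 21/200*α) := by linarith
  have h1 : (y + (13/20 + 21/200*α)) * (y + 1 + (13/20 + 271/200*α)) ≤
      (y + (5/2 + α)) * (y + α/2) := by
    nlinarith [mul_nonneg hα.le (show (0:ℝ) ≤ y - 6 by linarith), sq_nonneg α]
  rw [div_mul_div_comm, div_le_div_iff₀ (by positivity) p6]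
  nlinarith [mul_nonneg (show (0:ℝ) ≤ 5*α/4 by linarith) (sub_nonneg.2 h1)]

lemma tele' {α : ℝ} (hα : 0 < α) :
    ∀ n : ℕ, Phi α 6 * vv α (6 + n) ≤ vv α 6 * Phi α (6 + n) := by
  intro n
  induction n with
  | zero => simp [mul_comm]
  | succ n ih =>
    have hyn : (6:ℝ) ≤ 6 + n := by
      have : (0:ℝ) ≤ n := Nat.cast_nonneg n
      linarith
    have hyn0 : (0:ℝ) < 6 + n := by linarith
    have hf : 0 < ((6 + (n:ℝ)) + (5/2 + α/2)) * ((6 + (n:ℝ)) + α) /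
        (((6 + (n:ℝ)) + (5/2 + α)) * ((6 + (n:ℝ)) + α/2)) := by
      have h1 : (0:ℝ) < (6 + (n:ℝ)) + (5/2 + α/2) := by linarith
      have h2 : (0:ℝ) < (6 + (n:ℝ)) + α := by linarith
      have h3 : (0:ℝ) < (6 + (n:ℝ)) + (5/2 + α) := by linarith
      have h4 : (0:ℝ) < (6 + (n:ℝ)) + α/2 := by linarith
      positivity
    have hPhi6 := Phi_pos hα (show (0:ℝ) < 6 by norm_num)
    have recur := Phi_step hα hyn0 (α := α) (y := 6 + (n:ℝ))
    have hsv := step_v hα hyn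
    have hcast : (6:ℝ) + ((n:ℕ) + 1 : ℕ) = (6 + (n:ℝ)) + 1 := by push_cast; ring
    rw [hcast]
    set f := ((6 + (n:ℝ)) + (5/2 + α/2)) * ((6 + (n:ℝ)) + α) /
        (((6 + (n:ℝ)) + (5/2 + α)) * ((6 + (n:ℝ)) + α/2)) with hfdef
    have key : f * (Phi α 6 * vv α ((6 + (n:ℝ)) + 1)) ≤
        f * (vv α 6 * Phi α ((6 + (n:ℝ)) + 1)) := by
      calc f * (Phi α 6 * vv α ((6 + (n:ℝ)) + 1))
          = Phi α 6 * (f * vv α ((6 + (n:ℝ)) + 1)) := by ring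
        _ ≤ Phi α 6 * vv α (6 + (n:ℝ)) := mul_le_mul_of_nonneg_left hsv hPhi6.le
        _ ≤ vv α 6 * Phi α (6 + (n:ℝ)) := ih
        _ = vv α 6 * (f * Phi α ((6 + (n:ℝ)) + 1)) := by rw [recur]
        _ = f * (vv α 6 * Phi α ((6 + (n:ℝ)) + 1)) := by ring
    exact le_of_mul_le_mul_left key hf

lemma cap' {α : ℝ} (hα : 0 < α) (hα2 : α ≤ 2) :
    Phi α 1000 ≤ (1000 + α + (α/2) * (5/2 - α/2)) / (1000 + α/2) := by
  have hθ0 : (0:ℝ) ≤ α/2 := by linarith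
  have hθ1 : α/2 ≤ 1 := by linarith
  have ht1 : (0:ℝ) < 1000 + (5/2 + α/2) := by linarith
  have ht2 : (0:ℝ) < 1000 + α/2 := by linarith
  have up := gautschi_up' ht1 hθ0 hθ1
  rw [show 1000 + (5/2 + α/2) + α/2 = 1000 + (5/2 + α) by ring] at up
  have low := gautschi_low' ht2 hθ0 hθ1
  rw [show 1000 + α/2 + α/2 = 1000 + α by ring] at low
  have hA := Real.Gamma_pos_of_pos (show (0:ℝ) < 1000 + (5/2+α) by linarith)
  have hB := Real.Gamma_pos_of_pos (show (0:ℝ) < 1000 + α/2 by linarith)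
  have hC := Real.Gamma_pos_of_pos ht1
  have hE := Real.Gamma_pos_of_pos (show (0:ℝ) < 1000 + α by linarith)
  have am : (1000 + (5/2 + α/2)) ^ (α/2) * (1000 + α) ^ (1 - α/2) ≤
      (α/2) * (1000 + (5/2 + α/2)) + (1 - α/2) * (1000 + α) :=
    Real.geom_mean_le_arith_mean2_weighted hθ0 (by linarith) ht1.le (by linarith) (by ring)
  have m1 : Real.Gamma (1000 + (5/2+α)) * (Real.Gamma (1000 + α/2) * (1000 + α/2)) ≤
      (Real.Gamma (1000 + (5/2+α/2)) * (1000 + (5/2+α/2)) ^ (α/2)) *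
      (Real.Gamma (1000 + α) * (1000 + α) ^ (1 - α/2)) := by
    apply mul_le_mul up low (by positivity) (by positivity)
  unfold Phi
  rw [div_le_div_iff₀ (by positivity) ht2]
  have hS : (α/2) * (1000 + (5/2 + α/2)) + (1 - α/2) * (1000 + α) =
      1000 + α + (α/2) * (5/2 - α/2) := by ring
  rw [hS] at am
  have pw1 : (0:ℝ) < (1000 + (5/2 + α/2)) ^ (α/2) := Real.rpow_pos_of_pos ht1 _
  have pw2 : (0:ℝ) < (1000 + α) ^ (1 - α/2) := Real.rpow_pos_of_pos (by linarith) _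
  nlinarith [mul_le_mul_of_nonneg_left am (mul_pos hC hE).le, m1,
    mul_pos hC hE, mul_pos hA hB]

set_option maxHeartbeats 8000000 in
theorem stmt19 (α : ℝ) (hα : α ∈ Set.Ioc (0:ℝ) 2)
    (a b : ℝ → ℝ)
    (ha : a = fun α => (14 - 3 * α) * (3 + α) / (1200 * (7 + α)))
    (hb : b = fun α => -(1 / 120) * (-α ^ 3 + 3 * α ^ 2 + 64 * α + 168) / (7 + α)) :
    Real.Gamma (α / 2 + 2) * Real.Gamma (α + 9 / 2) /
        (Real.Gamma (α / 2 + 11 / 2) * Real.Gamma (α + 2)) <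
      (-b α + Real.sqrt (b α ^ 2 - 4 * a α * (α + 2))) / (2 * a α * (90 + 19 * α)) := by
  obtain ⟨hα1, hα2⟩ := hα
  simp only [ha, hb]
  set aa : ℝ := (14 - 3 * α) * (3 + α) / (1200 * (7 + α)) with haa
  set bb : ℝ := -(1 / 120) * (-α ^ 3 + 3 * α ^ 2 + 64 * α + 168) / (7 + α) with hbb
  set Ub : ℝ := (90+19*α) *
    (((2+(5/2+α/2))*(2+α))/((2+(5/2+α))*(2+α/2)) *
    (((3+(5/2+α/2))*(3+α))/((3+(5/2+α))*(3+α/2)) *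
    (((4+(5/2+α/2))*(4+α))/((4+(5/2+α))*(4+α/2)) *
    (((5+(5/2+α/2))*(5+α))/((5+(5/2+α))*(5+α/2)) *
    (vv α 6 * ((1000 + α + (α/2) * (5/2 - α/2)) / (1000 + α/2)) / vv α 1000))))) / (α/2+9/2)
    with hUbdef
  -- Gamma part: goal LHS ≤ Ub / (90+19α)
  have hv6 : 0 < vv α 6 := vv_pos hα1 (by norm_num)
  have hv1000 : 0 < vv α 1000 := vv_pos hα1 (by norm_num)
  have t994 := tele' hα1 994
  norm_num at t994
  have hc := cap' hα1 hα2
  have hcappos : 0 < (1000 + α + (α/2) * (5/2 - α/2)) / (1000 + α/2) := by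
    have h1 : (0:ℝ) < 1000 + α + (α/2) * (5/2 - α/2) := by nlinarith
    have h2 : (0:ℝ) < 1000 + α/2 := by linarith
    positivity
  have hPhi6 : Phi α 6 ≤ vv α 6 * ((1000 + α + (α/2) * (5/2 - α/2)) / (1000 + α/2)) /
      vv α 1000 := by
    rw [le_div_iff₀ hv1000]
    calc Phi α 6 * vv α 1000 ≤ vv α 6 * Phi α 1000 := t994
      _ ≤ vv α 6 * ((1000 + α + (α/2) * (5/2 - α/2)) / (1000 + α/2)) :=
          mul_le_mul_of_nonneg_left hc hv6.le
  have s2 := Phi_step hα1 (show (0:ℝ) < 2 by norm_num)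
  rw [show (2:ℝ)+1 = 3 by norm_num] at s2
  have s3 := Phi_step hα1 (show (0:ℝ) < 3 by norm_num)
  rw [show (3:ℝ)+1 = 4 by norm_num] at s3
  have s4 := Phi_step hα1 (show (0:ℝ) < 4 by norm_num)
  rw [show (4:ℝ)+1 = 5 by norm_num] at s4
  have s5 := Phi_step hα1 (show (0:ℝ) < 5 by norm_num)
  rw [show (5:ℝ)+1 = 6 by norm_num] at s5
  have hfpos : ∀ j:ℝ, 0 < j →
      0 < ((j+(5/2+α/2))*(j+α))/((j+(5/2+α))*(j+α/2)) := by
    intro j hj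
    exact div_pos (mul_pos (by linarith) (by linarith)) (mul_pos (by linarith) (by linarith))
  have hZpos : 0 < vv α 6 * ((1000 + α + (α/2) * (5/2 - α/2)) / (1000 + α/2)) / vv α 1000 := by
    positivity
  have hPhi2 : Phi α 2 ≤
      ((2+(5/2+α/2))*(2+α))/((2+(5/2+α))*(2+α/2)) *
      (((3+(5/2+α/2))*(3+α))/((3+(5/2+α))*(3+α/2)) *
      (((4+(5/2+α/2))*(4+α))/((4+(5/2+α))*(4+α/2)) *
      (((5+(5/2+α/2))*(5+α))/((5+(5/2+α))*(5+α/2)) *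
      (vv α 6 * ((1000 + α + (α/2) * (5/2 - α/2)) / (1000 + α/2)) / vv α 1000)))) := by
    rw [s2, s3, s4, s5]
    have h5 : ((5+(5/2+α/2))*(5+α))/((5+(5/2+α))*(5+α/2)) * Phi α 6 ≤
        ((5+(5/2+α/2))*(5+α))/((5+(5/2+α))*(5+α/2)) *
        (vv α 6 * ((1000 + α + (α/2) * (5/2 - α/2)) / (1000 + α/2)) / vv α 1000) :=
      mul_le_mul_of_nonneg_left hPhi6 (hfpos 5 (by norm_num)).le
    have h4 := mul_le_mul_of_nonneg_left h5 (hfpos 4 (by norm_num)).le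
    have h3 := mul_le_mul_of_nonneg_left h4 (hfpos 3 (by norm_num)).le
    exact mul_le_mul_of_nonneg_left h3 (hfpos 2 (by norm_num)).le
  have h92 : (0:ℝ) < α/2 + 9/2 := by linarith
  have hFeq : Real.Gamma (α / 2 + 2) * Real.Gamma (α + 9 / 2) /
      (Real.Gamma (α / 2 + 11 / 2) * Real.Gamma (α + 2)) = Phi α 2 / (α/2 + 9/2) := by
    unfold Phi
    rw [show (2:ℝ)+(5/2+α) = α + 9/2 by ring, show (2:ℝ)+α/2 = α/2 + 2 by ring,
      show (2:ℝ)+(5/2+α/2) = α/2 + 9/2 by ring, show (2:ℝ)+α = α + 2 by ring,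
      show α/2 + 11/2 = (α/2 + 9/2) + 1 by ring, Real.Gamma_add_one h92.ne']
    have n1 := (Real.Gamma_pos_of_pos (show (0:ℝ) < α/2 + 9/2 by linarith)).ne'
    have n2 := (Real.Gamma_pos_of_pos (show (0:ℝ) < α + 2 by linarith)).ne'
    field_simp
  have hUb : (90+19*α) * (Real.Gamma (α / 2 + 2) * Real.Gamma (α + 9 / 2) /
      (Real.Gamma (α / 2 + 11 / 2) * Real.Gamma (α + 2))) ≤ Ub := by
    rw [hFeq, hUbdef, mul_div_assoc]
    apply mul_le_mul_of_nonneg_left _ (show (0:ℝ) ≤ 90+19*α by linarith)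
    exact (div_le_div_iff_of_pos_right h92).mpr hPhi2
  -- polynomial positivity
  have Ppos : (0:ℝ) < α^2 * (((144215474009199457423579292475 : ℝ)/2048) + ((62468691564877584641012276654085 : ℝ)/4096) * α + ((849530712815290478299354057044567 : ℝ)/16384) * α ^ 2 + ((6754387498495180886768350278795651 : ℝ)/81920) * α ^ 3 + ((1064337068503903473020590421343364503 : ℝ)/13107200) * α ^ 4 + ((7273467875171746107212118795474144147 : ℝ)/131072000) * α ^ 5 + ((3663291735570668652514918494280095273 : ℝ)/131072000) * α ^ 6 + ((1761983845044937447558738019145965019 : ℝ)/163840000) * α ^ 7 + ((211908705480502215075353000971618552773 : ℝ)/65536000000) * α ^ 8 + ((504833838204584034018016421037556972449 : ℝ)/655360000000) * α ^ 9 + ((30009410916420835279298530177596862251 : ℝ)/204800000000) * α ^ 10 + ((146230933813437717464083451198256574803 : ℝ)/6553600000000) * α ^ 11 + ((142264247519383845517803192190459882023 : ℝ)/52428800000000) * α ^ 12 + ((27410927124030910864765520853756037647 : ℝ)/104857600000000) * α ^ 13 + ((2058914147221387661706978946079294691 : ℝ)/104857600000000) * α ^ 14 + ((117098164110356851304567704845414351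 : ℝ)/104857600000000) * α ^ 15 + ((4755843880853138922015316750741077 : ℝ)/104857600000000) * α ^ 16 + ((29577103150258533430185143791881 : ℝ)/26214400000000) * α ^ 17 + ((30123122422953905419734843897 : ℝ)/5242880000000) * α ^ 18 + ((-9032695390973425463015615787 : ℝ)/13107200000000) * α ^ 19 + ((-319739757972388429281166449 : ℝ)/13107200000000) * α ^ 20 + ((-14749740253351740443097837 : ℝ)/52428800000000) * α ^ 21 + ((107439912936510119564487 : ℝ)/52428800000000) * α ^ 22 + ((255809226263845078671 : ℝ)/3276800000000) * α ^ 23 + ((1725922441840384767 : ℝ)/3276800000000) * α ^ 24 + ((749505629186643 : ℝ)/6553600000000) * α ^ 25 + ((41229263313 : ℝ)/6553600000000) * α ^ 26) := by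
    have hq : (0:ℝ) < ((144215474009199457423579292475 : ℝ)/2048) + ((62468691564877584641012276654085 : ℝ)/4096) * α + ((849530712815290478299354057044567 : ℝ)/16384) * α ^ 2 + ((6754387498495180886768350278795651 : ℝ)/81920) * α ^ 3 + ((1064337068503903473020590421343364503 : ℝ)/13107200) * α ^ 4 + ((7273467875171746107212118795474144147 : ℝ)/131072000) * α ^ 5 + ((3663291735570668652514918494280095273 : ℝ)/131072000) * α ^ 6 + ((1761983845044937447558738019145965019 : ℝ)/163840000) * α ^ 7 + ((211908705480502215075353000971618552773 : ℝ)/65536000000) * α ^ 8 + ((504833838204584034018016421037556972449 : ℝ)/655360000000) * α ^ 9 + ((30009410916420835279298530177596862251 : ℝ)/204800000000) * α ^ 10 + ((146230933813437717464083451198256574803 : ℝ)/6553600000000) * α ^ 11 + ((142264247519383845517803192190459882023 : ℝ)/52428800000000) * α ^ 12 + ((27410927124030910864765520853756037647 : ℝ)/104857600000000) * α ^ 13 + ((2058914147221387661706978946079294691 : ℝ)/104857600000000) * α ^ 14 + ((117098164110356851304567704845414351 : ℝ)/104857600000000) * α ^ 15 + ((4755843880853138922015316750741077 : ℝ)/104857600000000)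 * α ^ 16 + ((29577103150258533430185143791881 : ℝ)/26214400000000) * α ^ 17 + ((30123122422953905419734843897 : ℝ)/5242880000000) * α ^ 18 + ((-9032695390973425463015615787 : ℝ)/13107200000000) * α ^ 19 + ((-319739757972388429281166449 : ℝ)/13107200000000) * α ^ 20 + ((-14749740253351740443097837 : ℝ)/52428800000000) * α ^ 21 + ((107439912936510119564487 : ℝ)/52428800000000) * α ^ 22 + ((255809226263845078671 : ℝ)/3276800000000) * α ^ 23 + ((1725922441840384767 : ℝ)/3276800000000) * α ^ 24 + ((749505629186643 : ℝ)/6553600000000) * α ^ 25 + ((41229263313 : ℝ)/6553600000000) * α ^ 26 := by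
      have p19 : α^19 ≤ 2^19 := pow_le_pow_left₀ hα1.le hα2 19
      have p20 : α^20 ≤ 2^20 := pow_le_pow_left₀ hα1.le hα2 20
      have p21 : α^21 ≤ 2^21 := pow_le_pow_left₀ hα1.le hα2 21
      have q1 : (0:ℝ) ≤ α := hα1.le
      have q2 : (0:ℝ) ≤ α^2 := by positivity
      have q3 : (0:ℝ) ≤ α^3 := by positivity
      have q4 : (0:ℝ) ≤ α^4 := by positivity
      have q5 : (0:ℝ) ≤ α^5 := by positivity
      have q6 : (0:ℝ) ≤ α^6 := by positivity
      have q7 : (0:ℝ) ≤ α^7 := by positivity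
      have q8 : (0:ℝ) ≤ α^8 := by positivity
      have q9 : (0:ℝ) ≤ α^9 := by positivity
      have q10 : (0:ℝ) ≤ α^10 := by positivity
      have q11 : (0:ℝ) ≤ α^11 := by positivity
      have q12 : (0:ℝ) ≤ α^12 := by positivity
      have q13 : (0:ℝ) ≤ α^13 := by positivity
      have q14 : (0:ℝ) ≤ α^14 := by positivity
      have q15 : (0:ℝ) ≤ α^15 := by positivity
      have q16 : (0:ℝ) ≤ α^16 := by positivity
      have q17 : (0:ℝ) ≤ α^17 := by positivity
      have q18 : (0:ℝ) ≤ α^18 := by positivity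
      have q22 : (0:ℝ) ≤ α^22 := by positivity
      have q23 : (0:ℝ) ≤ α^23 := by positivity
      have q24 : (0:ℝ) ≤ α^24 := by positivity
      have q25 : (0:ℝ) ≤ α^25 := by positivity
      have q26 : (0:ℝ) ≤ α^26 := by positivity
      linarith
    have h2 : (0:ℝ) < α^2 := by positivity
    positivity
  have hkey : 1200*(7+α) *
      ((α/2+9/2)*((2+(5/2+α))*(2+α/2))*((3+(5/2+α))*(3+α/2))*((4+(5/2+α))*(4+α/2))*
       ((5+(5/2+α))*(5+α/2))*(6+(13/20+21/200*α))*(1000+(13/20+271/200*α))*(1000+α/2))^2 *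
      (aa*Ub^2 + bb*Ub + (α+2)) =
      -(α^2 * (((144215474009199457423579292475 : ℝ)/2048) + ((62468691564877584641012276654085 : ℝ)/4096) * α + ((849530712815290478299354057044567 : ℝ)/16384) * α ^ 2 + ((6754387498495180886768350278795651 : ℝ)/81920) * α ^ 3 + ((1064337068503903473020590421343364503 : ℝ)/13107200) * α ^ 4 + ((7273467875171746107212118795474144147 : ℝ)/131072000) * α ^ 5 + ((3663291735570668652514918494280095273 : ℝ)/131072000) * α ^ 6 + ((1761983845044937447558738019145965019 : ℝ)/163840000) * α ^ 7 + ((211908705480502215075353000971618552773 : ℝ)/65536000000) * α ^ 8 + ((504833838204584034018016421037556972449 : ℝ)/655360000000) * α ^ 9 + ((30009410916420835279298530177596862251 : ℝ)/204800000000) * α ^ 10 + ((146230933813437717464083451198256574803 : ℝ)/6553600000000) * α ^ 11 + ((142264247519383845517803192190459882023 : ℝ)/52428800000000) * α ^ 12 + ((27410927124030910864765520853756037647 : ℝ)/104857600000000) * α ^ 13 + ((2058914147221387661706978946079294691 : ℝ)/104857600000000) * α ^ 14 + ((117098164110356851304567704845414351 : ℝ)/104857600000000) * α ^ 15 + ((4755843880853138922015316750741077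 : ℝ)/104857600000000) * α ^ 16 + ((29577103150258533430185143791881 : ℝ)/26214400000000) * α ^ 17 + ((30123122422953905419734843897 : ℝ)/5242880000000) * α ^ 18 + ((-9032695390973425463015615787 : ℝ)/13107200000000) * α ^ 19 + ((-319739757972388429281166449 : ℝ)/13107200000000) * α ^ 20 + ((-14749740253351740443097837 : ℝ)/52428800000000) * α ^ 21 + ((107439912936510119564487 : ℝ)/52428800000000) * α ^ 22 + ((255809226263845078671 : ℝ)/3276800000000) * α ^ 23 + ((1725922441840384767 : ℝ)/3276800000000) * α ^ 24 + ((749505629186643 : ℝ)/6553600000000) * α ^ 25 + ((41229263313 : ℝ)/6553600000000) * α ^ 26)) := by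
    rw [haa, hbb, hUbdef]
    unfold vv
    have n1 : (7+α) ≠ 0 := by linarith
    have n2 : (α/2+9/2) ≠ 0 := by linarith
    have n3 : ((2:ℝ)+(5/2+α)) ≠ 0 := by linarith
    have n4 : ((2:ℝ)+α/2) ≠ 0 := by linarith
    have n5 : ((3:ℝ)+(5/2+α)) ≠ 0 := by linarith
    have n6 : ((3:ℝ)+α/2) ≠ 0 := by linarith
    have n7 : ((4:ℝ)+(5/2+α)) ≠ 0 := by linarith
    have n8 : ((4:ℝ)+α/2) ≠ 0 := by linarith
    have n9 : ((5:ℝ)+(5/2+α)) ≠ 0 := by linarith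
    have n10 : ((5:ℝ)+α/2) ≠ 0 := by linarith
    have n11 : ((6:ℝ)+(13/20+21/200*α)) ≠ 0 := by linarith
    have n12 : ((1000:ℝ)+(13/20+271/200*α)) ≠ 0 := by linarith
    have n13 : ((1000:ℝ)+α/2) ≠ 0 := by linarith
    have n14 : ((6:ℝ)+(13/20+271/200*α)) ≠ 0 := by linarith
    have n15 : ((1000:ℝ)+(13/20+21/200*α)) ≠ 0 := by linarith
    field_simp
    ring
  have hM : (0:ℝ) < 1200*(7+α) *
      ((α/2+9/2)*((2+(5/2+α))*(2+α/2))*((3+(5/2+α))*(3+α/2))*((4+(5/2+α))*(4+α/2))*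
       ((5+(5/2+α))*(5+α/2))*(6+(13/20+21/200*α))*(1000+(13/20+271/200*α))*(1000+α/2))^2 := by
    have h1 : (0:ℝ) < 7+α := by linarith
    have h2 : (α/2+9/2)*((2+(5/2+α))*(2+α/2))*((3+(5/2+α))*(3+α/2))*((4+(5/2+α))*(4+α/2))*
       ((5+(5/2+α))*(5+α/2))*(6+(13/20+21/200*α))*(1000+(13/20+271/200*α))*(1000+α/2) ≠ 0 := by
      have a1 : (0:ℝ) < α/2+9/2 := by linarith
      have a2 : (0:ℝ) < (2+(5/2+α))*(2+α/2) := mul_pos (by linarith) (by linarith)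
      have a3 : (0:ℝ) < (3+(5/2+α))*(3+α/2) := mul_pos (by linarith) (by linarith)
      have a4 : (0:ℝ) < (4+(5/2+α))*(4+α/2) := mul_pos (by linarith) (by linarith)
      have a5 : (0:ℝ) < (5+(5/2+α))*(5+α/2) := mul_pos (by linarith) (by linarith)
      have a6 : (0:ℝ) < (6+(13/20+21/200*α)) := by linarith
      have a7 : (0:ℝ) < (1000+(13/20+271/200*α)) := by linarith
      have a8 : (0:ℝ) < (1000+α/2) := by linarith
      positivity
    positivity
  have hg : aa*Ub^2 + bb*Ub + (α+2) < 0 := by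
    nlinarith [hkey, Ppos, hM]
  have haapos : 0 < aa := by
    rw [haa]
    apply div_pos (mul_pos (by linarith) (by linarith)) (by linarith)
  have hd : (2*aa*Ub + bb)^2 < bb^2 - 4*aa*(α+2) := by
    nlinarith [hg, haapos, mul_pos haapos (show (0:ℝ) < -(aa*Ub^2 + bb*Ub + (α+2)) by linarith)]
  have hsq : 2*aa*Ub + bb < Real.sqrt (bb^2 - 4*aa*(α+2)) := by
    have h0 : 2*aa*Ub + bb ≤ |2*aa*Ub + bb| := le_abs_self _
    have h1 : |2*aa*Ub + bb| < Real.sqrt (bb^2 - 4*aa*(α+2)) := by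
      rw [← Real.sqrt_sq_eq_abs]
      exact Real.sqrt_lt_sqrt (sq_nonneg _) hd
    linarith
  have hUblt : Ub < (-bb + Real.sqrt (bb^2 - 4*aa*(α+2))) / (2*aa) := by
    rw [lt_div_iff₀ (by linarith : (0:ℝ) < 2*aa)]
    linarith
  have h90 : (0:ℝ) < 90 + 19*α := by linarith
  calc Real.Gamma (α / 2 + 2) * Real.Gamma (α + 9 / 2) /
        (Real.Gamma (α / 2 + 11 / 2) * Real.Gamma (α + 2))
      = ((90+19*α) * (Real.Gamma (α / 2 + 2) * Real.Gamma (α + 9 / 2) /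
        (Real.Gamma (α / 2 + 11 / 2) * Real.Gamma (α + 2)))) / (90+19*α) := by
        field_simp
    _ ≤ Ub / (90+19*α) := by
        exact (div_le_div_iff_of_pos_right h90).mpr hUb
    _ < ((-bb + Real.sqrt (bb^2 - 4*aa*(α+2))) / (2*aa)) / (90+19*α) := by
        exact (div_lt_div_iff_of_pos_right h90).mpr hUblt
    _ = (-bb + Real.sqrt (bb^2 - 4*aa*(α+2))) / (2*aa*(90+19*α)) := by
        rw [div_div]
end
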